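/- arXiv:0901.0246 — 6 statements merged into one kernel-verified Lean document; each statement's English description precedes it below -/
import Mathlib

section
/- Let d ≥ 1 and let P_n denote the n-step transition probabilities of the simple random walk on Z^d with holding. Then for all integers n ≥ 1 and all x ∈ Z^d, P_n(x) ≤ 2d · exp(−|x|²/(2dn)). -/
open scoped BigOperators

/-- Euclidean norm of a lattice point in `ℤ^d`. -/
noncomputable def latNorm {d : ℕ} (x : Fin d → ℤ) : ℝ :=
  Real.sqrt (∑ i, ((x i : ℝ)) ^ 2)

/-- Coercion of a lattice point to a real vector. -/
def toRealVec {d : ℕ} (x : Fin d → ℤ) : Fin d → ℝ := fun i => (x i : ℝ)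

/-- One-step transition kernel of the simple random walk on `ℤ^d` with holding. -/
noncomputable def srwStep (d : ℕ) (x : Fin d → ℤ) : ℝ :=
  if latNorm x ≤ 1 then 1 / (2 * (d : ℝ) + 1) else 0

/-- `n`-step transition probabilities of the simple random walk on `ℤ^d` with holding,
defined by convolution powers with `P₀ = δ₀`. -/
noncomputable def srwP (d : ℕ) : ℕ → (Fin d → ℤ) → ℝ
  | 0 => fun x => if x = 0 then 1 else 0
  | n + 1 => fun x => ∑' y : Fin d → ℤ, srwP d n y * srwStep d (x - y)

/-- The Gaussian (heat) kernel on `ℝ^d`: `φ_t(x) = (2πt)^{-d/2} exp(-|x|²/(2t))`. -/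
noncomputable def gauss (d : ℕ) (t : ℝ) (x : Fin d → ℝ) : ℝ :=
  (2 * Real.pi * t) ^ (-(d : ℝ) / 2) * Real.exp (-(∑ i, (x i) ^ 2) / (2 * t))

/-!
Chernoff bound in one coordinate. In coordinate `i` a step of the walk is symmetric and of size
at most `1`, so pairing each step with its negative and using `cosh t ≤ exp (t² / 2)` bounds its
exponential moment by `exp (λ² / 2)`. Hence `P_n(x) ≤ exp (n λ² / 2 - λ xᵢ)` for every `λ`,
which at `λ = xᵢ / n` is `exp (-xᵢ² / (2n))`. A coordinate maximising `xᵢ²` has `d xᵢ² ≥ |x|²`.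
-/

open Finset Real

theorem sum_exp_mul_le_card_mul_exp {G : Type*} [InvolutiveNeg G] (S : Finset G)
    (hS : ∀ z ∈ S, -z ∈ S) (g : G → ℝ) (hg_neg : ∀ z, g (-z) = -g z)
    (hg : ∀ z ∈ S, g z ^ 2 ≤ 1) (l : ℝ) :
    ∑ z ∈ S, exp (l * g z) ≤ #S * exp (l ^ 2 / 2) := by
  have hflip : ∑ z ∈ S, exp (-(l * g z)) = ∑ z ∈ S, exp (l * g z) :=
    sum_nbij' Neg.neg Neg.neg hS hS (fun z _ => neg_neg z) (fun z _ => neg_neg z)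
      (fun z _ => by rw [hg_neg, mul_neg])
  have hcosh : ∀ z ∈ S, cosh (l * g z) ≤ exp (l ^ 2 / 2) := fun z hz =>
    (cosh_le_exp_half_sq _).trans
      (exp_le_exp.2 (by nlinarith [hg z hz, sq_nonneg l]))
  calc ∑ z ∈ S, exp (l * g z) = ∑ z ∈ S, cosh (l * g z) := by
        simp only [cosh_eq, ← sum_div, sum_add_distrib, hflip]; ring
    _ ≤ ∑ _z ∈ S, exp (l ^ 2 / 2) := sum_le_sum hcosh
    _ = #S * exp (l ^ 2 / 2) := by rw [sum_const, nsmul_eq_mul]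

def srwMoves (d : ℕ) : Finset (Fin d → ℤ) :=
  insert 0 (univ.image fun p : Fin d × ℤˣ => Pi.single p.1 (p.2 : ℤ))

theorem mem_srwMoves_iff {d : ℕ} {z : Fin d → ℤ} : z ∈ srwMoves d ↔ ∑ i, z i ^ 2 ≤ 1 := by
  constructor
  · simp only [srwMoves, mem_insert, mem_image, mem_univ, true_and, Prod.exists]
    rintro (rfl | ⟨j, s, rfl⟩)
    · simp
    · simp [Pi.single_apply, Int.isUnit_sq s.isUnit]
  · intro h
    rcases eq_or_ne z 0 with rfl | hz
    · exact mem_insert_self _ _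
    obtain ⟨j, hj⟩ : ∃ j, z j ≠ 0 := Function.ne_iff.1 hz
    have hsplit := add_sum_erase univ (fun i => z i ^ 2) (mem_univ j)
    have hj_pos : 0 < z j ^ 2 := by positivity
    have hrest_nonneg : 0 ≤ ∑ k ∈ univ.erase j, z k ^ 2 := sum_nonneg fun _ _ => sq_nonneg _
    have hrest : ∀ k ∈ univ.erase j, z k ^ 2 = 0 :=
      (sum_eq_zero_iff_of_nonneg fun _ _ => sq_nonneg _).1 (by omega)
    have hunit : IsUnit (z j) := Int.isUnit_iff.2 (sq_eq_one_iff.1 (by omega))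
    refine mem_insert_of_mem (mem_image.2 ⟨(j, hunit.unit), mem_univ _, funext fun k => ?_⟩)
    rcases eq_or_ne k j with rfl | hk
    · simp
    · rw [Pi.single_eq_of_ne hk]
      exact ((pow_eq_zero_iff two_ne_zero).1 (hrest k (mem_erase.2 ⟨hk, mem_univ k⟩))).symm

theorem card_srwMoves (d : ℕ) : #(srwMoves d) = 2 * d + 1 := by
  have hinj : Function.Injective fun p : Fin d × ℤˣ => (Pi.single p.1 (p.2 : ℤ) : Fin d → ℤ) := by
    rintro ⟨j, s⟩ ⟨k, t⟩ h
    obtain rfl : j = k := by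
      by_contra hjk
      simpa [Pi.single_eq_of_ne hjk] using congrFun h j
    exact Prod.ext rfl (Units.ext (Pi.single_injective j h))
  rw [srwMoves, card_insert_of_notMem, card_image_of_injective _ hinj, card_univ,
    Fintype.card_prod, Fintype.card_fin, Fintype.card_units_int, mul_comm]
  simp

theorem neg_mem_srwMoves {d : ℕ} {z : Fin d → ℤ} (hz : z ∈ srwMoves d) : -z ∈ srwMoves d := by
  simpa [mem_srwMoves_iff] using hz

theorem sq_le_one_of_mem_srwMoves {d : ℕ} {z : Fin d → ℤ} (hz : z ∈ srwMoves d) (i : Fin d) :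
    z i ^ 2 ≤ 1 :=
  (single_le_sum (fun _ _ => sq_nonneg _) (mem_univ i)).trans (mem_srwMoves_iff.1 hz)

theorem srwStep_eq_ite {d : ℕ} (z : Fin d → ℤ) :
    srwStep d z = if z ∈ srwMoves d then (2 * (d : ℝ) + 1)⁻¹ else 0 := by
  have hball : latNorm z ≤ 1 ↔ z ∈ srwMoves d := by
    rw [latNorm, sqrt_le_one, mem_srwMoves_iff]
    exact_mod_cast Iff.rfl
  simp only [srwStep, hball, one_div]

theorem srwP_succ (d n : ℕ) (x : Fin d → ℤ) :
    srwP d (n + 1) x = (2 * (d : ℝ) + 1)⁻¹ * ∑ z ∈ srwMoves d, srwP d n (x - z) := by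
  simp only [srwP]
  rw [← (Equiv.subLeft x).tsum_eq, tsum_eq_sum (s := srwMoves d), mul_sum]
  · refine sum_congr rfl fun z hz => ?_
    simp [srwStep_eq_ite, hz, mul_comm]
  · intro z hz
    simp [srwStep_eq_ite, hz]

theorem srwP_le_exp (d : ℕ) (i : Fin d) (l : ℝ) (n : ℕ) (x : Fin d → ℤ) :
    srwP d n x ≤ exp (n * l ^ 2 / 2 - l * x i) := by
  induction n generalizing x with
  | zero =>
    simp only [srwP]
    split_ifs with hx
    · simp [hx]
    · positivity
  | succ n ih =>
    have hmgf := sum_exp_mul_le_card_mul_exp (srwMoves d) (fun _ => neg_mem_srwMoves)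
      (fun z => (z i : ℝ)) (fun z => by simp)
      (fun z hz => by exact_mod_cast sq_le_one_of_mem_srwMoves hz i) l
    rw [card_srwMoves] at hmgf
    push_cast at hmgf
    set E := exp (n * l ^ 2 / 2 - l * x i)
    calc srwP d (n + 1) x = (2 * (d : ℝ) + 1)⁻¹ * ∑ z ∈ srwMoves d, srwP d n (x - z) :=
          srwP_succ d n x
      _ ≤ (2 * (d : ℝ) + 1)⁻¹ * ∑ z ∈ srwMoves d, E * exp (l * z i) := by
          gcongr with z
          refine (ih (x - z)).trans_eq ?_
          rw [← exp_add]
          push_cast [Pi.sub_apply]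
          ring_nf
      _ = E * ((2 * (d : ℝ) + 1)⁻¹ * ∑ z ∈ srwMoves d, exp (l * z i)) := by
          rw [← mul_sum]; ring
      _ ≤ E * exp (l ^ 2 / 2) := by
          gcongr
          rwa [inv_mul_le_iff₀ (by positivity)]
      _ = exp ((n + 1 : ℕ) * l ^ 2 / 2 - l * x i) := by
          rw [← exp_add]
          push_cast
          ring_nf

theorem srwP_le_exp_neg_sq (d : ℕ) (i : Fin d) (n : ℕ) (x : Fin d → ℤ) :
    srwP d n x ≤ exp (-(x i : ℝ) ^ 2 / (2 * n)) := by
  convert srwP_le_exp d i ((x i : ℝ) / n) n x using 2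
  rcases eq_or_ne (n : ℝ) 0 with hn | hn
  · simp [hn]
  · field_simp
    ring

theorem srwP_le_hoeffding_general (d : ℕ) (hd : 1 ≤ d) (n : ℕ) (x : Fin d → ℤ) :
    srwP d n x ≤ 2 * (d : ℝ) * Real.exp (-(∑ i, ((x i : ℝ)) ^ 2) / (2 * d * n)) := by
  obtain ⟨i, -, hi⟩ := exists_max_image univ (fun j => (x j : ℝ) ^ 2) ⟨⟨0, hd⟩, mem_univ _⟩
  have hd_one : (1 : ℝ) ≤ d := by exact_mod_cast hd
  have hsum : ∑ j, (x j : ℝ) ^ 2 ≤ d * (x i : ℝ) ^ 2 := by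
    simpa using sum_le_card_nsmul univ _ _ hi
  have hratio : (∑ j, (x j : ℝ) ^ 2) / (2 * d * n) ≤ (x i : ℝ) ^ 2 / (2 * n) := by
    rw [show (2 * d * n : ℝ) = d * (2 * n) by ring, ← div_div]
    exact div_le_div_of_nonneg_right ((div_le_iff₀' (zero_lt_one.trans_le hd_one)).2 hsum) (by positivity)
  calc srwP d n x ≤ exp (-(x i : ℝ) ^ 2 / (2 * n)) := srwP_le_exp_neg_sq d i n x
    _ ≤ exp (-(∑ j, (x j : ℝ) ^ 2) / (2 * d * n)) := by
        rwa [neg_div, neg_div, exp_le_exp, neg_le_neg_iff]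
    _ ≤ 2 * d * exp (-(∑ j, (x j : ℝ) ^ 2) / (2 * d * n)) :=
        le_mul_of_one_le_left (exp_nonneg _) (by linarith)

/-- Hoeffding bound `P_n(x) ≤ 2d · exp(−|x|²/(2dn))`. -/
theorem srwP_le_hoeffding (d : ℕ) (hd : 1 ≤ d) (n : ℕ) (hn : 1 ≤ n) (x : Fin d → ℤ) :
    srwP d n x ≤ 2 * (d : ℝ) * Real.exp (-(∑ i, ((x i : ℝ)) ^ 2) / (2 * d * n)) :=
  srwP_le_hoeffding_general d hd n x
end

section
/- Let d ≥ 1 and let P_n denote the n-step transition probabilities of the simple random walk on Z^d with holding, and let φ_n be the Gaussian kernel. Then there exists β₀ > 0 such that for every β ∈ (0, β₀] there is a constant C = C(β) > 0 with: for all integers n ≥ 1 and all x ∈ Z^d, P_n(x) ≤ C φ_n(βx). -/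
open scoped BigOperators

/-!
Fourier inversion on `[-π, π]^d` writes `(2π)^d P_n(x)` as the integral of `φ(θ)^n e^{-i x·θ}`,
where `φ` is the characteristic function of one step. On the cube `|φ(θ)| ≤ exp(-c|θ|²)`, which
gives the on-diagonal bound `P_n ≤ K n^{-d/2}`. The exponential moments
`∑_y P_n(y) e^{λ·y} = ψ(λ)^n`, where `ψ(λ) = (1 + 2 ∑ cosh λ_i)/(2d + 1) ≤ exp(|λ|²/2)`, give
Chernoff tails `∑_{|y|² ≥ R} P_n(y) ≤ 2d exp(-R/(2dn))`. In `P_n(x) = ∑_y P_m(y) P_k(x - y)` with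
`m, k ≈ n/2`, one of `|y|²`, `|x - y|²` is at least `|x|²/4`, so each term is a tail weighted by
an on-diagonal bound: `P_n(x) ≤ K' n^{-d/2} exp(-|x|²/(8dn))`, which is `C φ_n(βx)` once
`β ≤ 1/(2√d)`.
-/

open Finset Real

section Step

variable {d : ℕ}

noncomputable def srwWeight (d : ℕ) : ℝ := 1 / (2 * (d : ℝ) + 1)

lemma srwWeight_pos : 0 < srwWeight d := by unfold srwWeight; positivity

lemma srwWeight_mul : srwWeight d * (2 * d + 1) = 1 := by
  unfold srwWeight; field_simp

def srwSupport (d : ℕ) : Finset (Fin d → ℤ) :=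
  insert 0 ((univ.image fun i => Pi.single i 1) ∪ (univ.image fun i => Pi.single i (-1)))

lemma sum_srwSupport {M : Type*} [AddCommMonoid M] (f : (Fin d → ℤ) → M) :
    ∑ z ∈ srwSupport d, f z = f 0 + ∑ i, (f (Pi.single i 1) + f (Pi.single i (-1))) := by
  have hinj (c : ℤ) (hc : c ≠ 0) :
      Function.Injective fun i : Fin d => (Pi.single i c : Fin d → ℤ) :=
    fun i j h => by_contra fun hij => hc (by simpa [Pi.single_apply, hij] using congrFun h i)
  rw [srwSupport, sum_insert, sum_union, sum_image fun i _ j _ h => hinj 1 one_ne_zero h,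
    sum_image fun i _ j _ h => hinj (-1) (by norm_num) h, sum_add_distrib]
  · rw [disjoint_left]
    simp only [mem_image, mem_univ, true_and, not_exists, forall_exists_index,
      forall_apply_eq_imp_iff]
    intro i j h
    by_cases hij : j = i <;> simpa [Pi.single_apply, hij] using congrFun h i
  · simp [funext_iff, Pi.single_apply]

lemma mem_srwSupport_iff {z : Fin d → ℤ} : z ∈ srwSupport d ↔ ∑ i, z i ^ 2 ≤ 1 := by
  constructor
  · simp only [srwSupport, mem_insert, mem_union, mem_image, mem_univ, true_and]
    rintro (rfl | ⟨i, rfl⟩ | ⟨i, rfl⟩) <;> simp [Pi.single_apply]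
  · intro h
    by_cases hz : z = 0
    · simp [srwSupport, hz]
    obtain ⟨i, hi⟩ : ∃ i, z i ≠ 0 := Function.ne_iff.1 hz
    have hzi : 0 < z i ^ 2 := by positivity
    have hrest_nonneg : 0 ≤ ∑ j ∈ univ.erase i, z j ^ 2 := sum_nonneg fun j _ => sq_nonneg _
    rw [← add_sum_erase _ _ (mem_univ i)] at h
    have hrest : ∀ j ≠ i, z j = 0 := fun j hj => by
      have := (sum_eq_zero_iff_of_nonneg fun j _ => sq_nonneg (z j)).1 (by omega) j
        (mem_erase.2 ⟨hj, mem_univ j⟩)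
      simpa using this
    have hz_single : z = Pi.single i (z i) := by
      ext j
      by_cases hj : j = i
      · subst hj; simp
      · simp [hj, hrest j hj]
    simp only [srwSupport, mem_insert, mem_union, mem_image, mem_univ, true_and]
    rcases sq_eq_one_iff.1 (show z i ^ 2 = 1 by omega) with h1 | h1
    · exact .inr (.inl ⟨i, by rw [hz_single, h1]⟩)
    · exact .inr (.inr ⟨i, by rw [hz_single, h1]⟩)

lemma srwStep_eq (z : Fin d → ℤ) :
    srwStep d z = if z ∈ srwSupport d then srwWeight d else 0 := by
  have hnorm : latNorm z ≤ 1 ↔ ∑ i, z i ^ 2 ≤ 1 := by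
    rw [latNorm, Real.sqrt_le_one, ← Int.cast_le (R := ℝ)]
    push_cast
    rfl
  simp only [srwStep, hnorm, ← mem_srwSupport_iff, srwWeight]

lemma srwP_succ_eq (n : ℕ) (x : Fin d → ℤ) :
    srwP d (n + 1) x = srwWeight d * ∑ z ∈ srwSupport d, srwP d n (x - z) := by
  change ∑' y, srwP d n y * srwStep d (x - y) = _
  rw [← (Equiv.subLeft x).tsum_eq]
  simp only [Equiv.subLeft_apply, sub_sub_cancel, srwStep_eq, mul_ite, mul_zero]
  rw [tsum_eq_sum (s := srwSupport d) fun z hz => if_neg hz, sum_ite_mem, inter_self,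
    mul_sum]
  exact sum_congr rfl fun _ _ => mul_comm _ _

lemma srwP_nonneg (n : ℕ) (x : Fin d → ℤ) : 0 ≤ srwP d n x := by
  induction n generalizing x with
  | zero => unfold srwP; positivity
  | succ n ih =>
    rw [srwP_succ_eq]
    exact mul_nonneg srwWeight_pos.le (sum_nonneg fun z _ => ih _)

end Step

section Support

variable {d : ℕ}

noncomputable def latticeBox (d n : ℕ) : Finset (Fin d → ℤ) :=
  Fintype.piFinset fun _ => Icc (-(n : ℤ)) n

lemma mem_latticeBox {n : ℕ} {x : Fin d → ℤ} : x ∈ latticeBox d n ↔ ∀ i, |x i| ≤ n := by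
  simp [latticeBox, abs_le]

lemma abs_le_one_of_mem_srwSupport {z : Fin d → ℤ} (hz : z ∈ srwSupport d) (i : Fin d) :
    |z i| ≤ 1 := by
  rw [← sq_le_one_iff_abs_le_one]
  exact (single_le_sum (fun j _ => sq_nonneg (z j)) (mem_univ i)).trans
    (mem_srwSupport_iff.1 hz)

lemma add_mem_latticeBox {n : ℕ} {y z : Fin d → ℤ} (hy : y ∈ latticeBox d n)
    (hz : z ∈ srwSupport d) : y + z ∈ latticeBox d (n + 1) := by
  rw [mem_latticeBox] at hy ⊢
  intro i
  push_cast
  exact (abs_add_le _ _).trans (add_le_add (hy i) (abs_le_one_of_mem_srwSupport hz i))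

lemma srwP_zero_apply (x : Fin d → ℤ) : srwP d 0 x = if x = 0 then 1 else 0 := rfl

lemma srwP_eq_zero_of_notMem {n : ℕ} {x : Fin d → ℤ} (hx : x ∉ latticeBox d n) :
    srwP d n x = 0 := by
  induction n generalizing x with
  | zero =>
    rw [srwP_zero_apply, if_neg]
    rintro rfl
    exact hx (mem_latticeBox.2 (by simp))
  | succ n ih =>
    rw [srwP_succ_eq, sum_eq_zero fun z hz => ih fun h => hx ?_, mul_zero]
    simpa using add_mem_latticeBox h hz

lemma Finset.sum_sub_eq_sum_of_forall_add_mem {G M : Type*} [AddCommGroup G] [AddCommMonoid M]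
    {A B : Finset G} {f : G → M} (z : G) (hAB : ∀ y ∈ A, y + z ∈ B)
    (hf : ∀ y ∉ A, f y = 0) : ∑ x ∈ B, f (x - z) = ∑ y ∈ A, f y := by
  have hmap : A.map (addRightEmbedding z) ⊆ B := by
    simpa [subset_iff] using hAB
  rw [← sum_subset hmap fun x _ hx => hf _ fun h => hx (mem_map.2 ⟨x - z, h, by simp⟩)]
  simp

lemma srwP_add (m k : ℕ) (x : Fin d → ℤ) :
    srwP d (m + k) x = ∑ y ∈ latticeBox d m, srwP d m y * srwP d k (x - y) := by
  induction k generalizing x with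
  | zero =>
    simp only [Nat.add_zero, srwP_zero_apply, sub_eq_zero, mul_ite, mul_one, mul_zero]
    rw [sum_ite_eq]
    split_ifs with h
    · rfl
    · exact srwP_eq_zero_of_notMem h
  | succ k ih =>
    rw [← add_assoc, srwP_succ_eq]
    simp only [ih, mul_sum, srwP_succ_eq]
    rw [sum_comm]
    exact sum_congr rfl fun _ _ => sum_congr rfl fun _ _ => by rw [sub_right_comm]; ring

end Support

section Tail

open Matrix

variable {d : ℕ}

lemma latNorm_sq (x : Fin d → ℤ) : latNorm x ^ 2 = ∑ i, (x i : ℝ) ^ 2 :=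
  Real.sq_sqrt (sum_nonneg fun _ _ => sq_nonneg _)

@[simp] lemma toRealVec_zero : toRealVec (0 : Fin d → ℤ) = 0 := by
  ext; simp [toRealVec]

lemma toRealVec_sub (x y : Fin d → ℤ) : toRealVec (x - y) = toRealVec x - toRealVec y := by
  ext; simp [toRealVec]

lemma toRealVec_single (i : Fin d) (c : ℤ) :
    toRealVec (Pi.single i c) = Pi.single i (c : ℝ) := by
  ext j; by_cases h : j = i <;> simp [toRealVec, h]

noncomputable def stepMGF (d : ℕ) (t : Fin d → ℝ) : ℝ :=
  srwWeight d * ∑ z ∈ srwSupport d, exp (t ⬝ᵥ toRealVec z)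

lemma stepMGF_eq (t : Fin d → ℝ) : stepMGF d t = srwWeight d * (1 + 2 * ∑ i, cosh (t i)) := by
  simp only [stepMGF, sum_srwSupport, toRealVec_single, dotProduct_single, mul_sum, cosh_eq]
  simp [mul_div_cancel₀, exp_neg]

lemma stepMGF_le (t : Fin d → ℝ) : stepMGF d t ≤ exp (t ⬝ᵥ t / 2) := by
  have hcosh (i : Fin d) : cosh (t i) ≤ exp (t ⬝ᵥ t / 2) := by
    refine (cosh_le_exp_half_sq _).trans (exp_le_exp.2 ?_)
    gcongr
    rw [sq, dotProduct]
    exact single_le_sum (f := fun j => t j * t j) (fun j _ => mul_self_nonneg _) (mem_univ i)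
  have hone : 1 ≤ exp (t ⬝ᵥ t / 2) :=
    one_le_exp (div_nonneg (dotProduct_self_star_nonneg t) two_pos.le)
  calc stepMGF d t ≤ srwWeight d * (exp (t ⬝ᵥ t / 2) + 2 * ∑ _i : Fin d, exp (t ⬝ᵥ t / 2)) := by
        rw [stepMGF_eq]
        gcongr with i
        · exact srwWeight_pos.le
        · exact hcosh i
    _ = exp (t ⬝ᵥ t / 2) := by
        rw [sum_const, card_univ, Fintype.card_fin, nsmul_eq_mul]
        linear_combination exp (t ⬝ᵥ t / 2) * srwWeight_mul (d := d)

lemma sum_srwP_mul_exp (n : ℕ) (t : Fin d → ℝ) :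
    ∑ y ∈ latticeBox d n, srwP d n y * exp (t ⬝ᵥ toRealVec y) = stepMGF d t ^ n := by
  induction n with
  | zero =>
    rw [sum_eq_single 0 (fun y _ hy => by rw [srwP_zero_apply, if_neg hy, zero_mul])
      (fun h => (h (mem_latticeBox.2 (by simp))).elim)]
    simp [srwP_zero_apply]
  | succ n ih =>
    have hshift (z : Fin d → ℤ) (hz : z ∈ srwSupport d) :
        ∑ x ∈ latticeBox d (n + 1), srwP d n (x - z) * exp (t ⬝ᵥ toRealVec x)
          = exp (t ⬝ᵥ toRealVec z) * stepMGF d t ^ n := by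
      rw [← ih, mul_sum, ← sum_sub_eq_sum_of_forall_add_mem z
        (f := fun y => exp (t ⬝ᵥ toRealVec z) * (srwP d n y * exp (t ⬝ᵥ toRealVec y)))
        (fun y hy => add_mem_latticeBox hy hz)
        (fun y hy => by rw [srwP_eq_zero_of_notMem hy, zero_mul, mul_zero])]
      refine sum_congr rfl fun x _ => ?_
      rw [toRealVec_sub, dotProduct_sub, exp_sub]
      field_simp
    simp only [srwP_succ_eq, sum_mul, mul_assoc, ← mul_sum]
    rw [sum_comm, sum_congr rfl hshift, ← sum_mul, ← mul_assoc, pow_succ', stepMGF]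

lemma sum_srwP_le_exp_of_le_dotProduct (N : ℕ) (t : Fin d → ℝ) {R : ℝ}
    {F : Finset (Fin d → ℤ)} (hF : ∀ y ∈ F, R ≤ t ⬝ᵥ toRealVec y) :
    ∑ y ∈ F, srwP d N y ≤ exp (-R + N * (t ⬝ᵥ t) / 2) := by
  classical
  have hmarkov (y : Fin d → ℤ) (hy : y ∈ F) :
      srwP d N y ≤ exp (-R) * (srwP d N y * exp (t ⬝ᵥ toRealVec y)) := by
    rw [mul_left_comm, ← exp_add]
    exact le_mul_of_one_le_right (srwP_nonneg N y) (one_le_exp (by linarith [hF y hy]))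
  calc ∑ y ∈ F, srwP d N y
      ≤ exp (-R) * ∑ y ∈ F ∪ latticeBox d N, srwP d N y * exp (t ⬝ᵥ toRealVec y) := by
        rw [mul_sum]
        refine (sum_le_sum hmarkov).trans (sum_le_sum_of_subset_of_nonneg subset_union_left
          fun y _ _ => ?_)
        have := srwP_nonneg N y
        positivity
    _ = exp (-R) * stepMGF d t ^ N := by
        rw [← sum_srwP_mul_exp]
        congr 1
        exact (sum_subset subset_union_right fun y _ hy => by
          rw [srwP_eq_zero_of_notMem hy, zero_mul]).symm
    _ ≤ exp (-R) * exp (t ⬝ᵥ t / 2) ^ N := by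
        gcongr
        · exact mul_nonneg srwWeight_pos.le (sum_nonneg fun _ _ => (exp_pos _).le)
        · exact stepMGF_le t
    _ = exp (-R + N * (t ⬝ᵥ t) / 2) := by
        rw [← exp_nat_mul, ← exp_add]
        ring_nf

lemma sum_srwP_le_of_le_mul_coord {N : ℕ} (hN : 0 < N) {a s : ℝ} (ha : 0 ≤ a)
    (hs : s ^ 2 = 1) (i : Fin d) {F : Finset (Fin d → ℤ)} (hF : ∀ y ∈ F, a ≤ s * y i) :
    ∑ y ∈ F, srwP d N y ≤ exp (-a ^ 2 / (2 * N)) := by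
  have hNpos : (0 : ℝ) < N := Nat.cast_pos.2 hN
  have hdot (y : Fin d → ℤ) (hy : y ∈ F) :
      a ^ 2 / N ≤ Pi.single i (s * a / N) ⬝ᵥ toRealVec y := by
    rw [single_dotProduct, toRealVec, mul_comm s, mul_div_right_comm, mul_assoc, sq,
      mul_div_right_comm]
    exact mul_le_mul_of_nonneg_left (hF y hy) (div_nonneg ha hNpos.le)
  refine (sum_srwP_le_exp_of_le_dotProduct N _ hdot).trans_eq (congrArg exp ?_)
  rw [single_dotProduct, Pi.single_eq_same]
  field_simp
  linear_combination a ^ 2 * hs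

lemma sum_srwP_le_of_le_abs_coord {N : ℕ} (hN : 0 < N) {a : ℝ} (ha : 0 ≤ a) (i : Fin d)
    {F : Finset (Fin d → ℤ)} (hF : ∀ y ∈ F, a ≤ |(y i : ℝ)|) :
    ∑ y ∈ F, srwP d N y ≤ 2 * exp (-a ^ 2 / (2 * N)) := by
  rw [← sum_filter_add_sum_filter_not F fun y => a ≤ (y i : ℝ), two_mul]
  refine add_le_add (sum_srwP_le_of_le_mul_coord hN ha (one_pow 2) i fun y hy => ?_)
    (sum_srwP_le_of_le_mul_coord hN ha neg_one_sq i fun y hy => ?_)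
  · rw [one_mul]; exact (mem_filter.1 hy).2
  · obtain ⟨hyF, hlt⟩ := mem_filter.1 hy
    rcases le_abs'.1 (hF y hyF) with h | h
    · linarith
    · exact absurd h hlt

lemma sum_srwP_le_of_le_latNorm_sq (hd : 0 < d) {N : ℕ} (hN : 0 < N) {R : ℝ} (hR : 0 ≤ R)
    {F : Finset (Fin d → ℤ)} (hF : ∀ y ∈ F, R ≤ latNorm y ^ 2) :
    ∑ y ∈ F, srwP d N y ≤ 2 * d * exp (-R / (2 * d * N)) := by
  classical
  have hdpos : (0 : ℝ) < d := Nat.cast_pos.2 hd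
  set a := √(R / d)
  have ha_sq : a ^ 2 = R / d := sq_sqrt (div_nonneg hR hdpos.le)
  have hcoord (y : Fin d → ℤ) (hy : y ∈ F) : ∃ i, a ≤ |(y i : ℝ)| := by
    by_contra! h
    have hlt : latNorm y ^ 2 < R := by
      rw [latNorm_sq]
      calc ∑ i, (y i : ℝ) ^ 2 < ∑ _i : Fin d, R / d :=
            sum_lt_sum_of_nonempty (univ_nonempty_iff.2 ⟨⟨0, hd⟩⟩) fun i _ => by
              rw [← sq_abs, ← ha_sq]
              exact pow_lt_pow_left₀ (h i) (abs_nonneg _) two_ne_zero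
        _ = R := by
            rw [sum_const, card_univ, Fintype.card_fin, nsmul_eq_mul]
            field_simp
    exact (hF y hy).not_gt hlt
  calc ∑ y ∈ F, srwP d N y
      ≤ ∑ y ∈ F, ∑ i, if a ≤ |(y i : ℝ)| then srwP d N y else 0 := sum_le_sum fun y hy => by
        obtain ⟨i, hi⟩ := hcoord y hy
        refine (if_pos hi).symm.le.trans (single_le_sum (f := fun i =>
          if a ≤ |(y i : ℝ)| then srwP d N y else 0) (fun j _ => ?_) (mem_univ i))
        exact ite_nonneg (srwP_nonneg N y) le_rfl
    _ = ∑ i, ∑ y ∈ F with a ≤ |(y i : ℝ)|, srwP d N y := by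
        rw [sum_comm]
        simp only [sum_filter]
    _ ≤ ∑ _i : Fin d, 2 * exp (-a ^ 2 / (2 * N)) :=
        sum_le_sum fun i _ => sum_srwP_le_of_le_abs_coord hN (sqrt_nonneg _) i
          fun y hy => (mem_filter.1 hy).2
    _ = 2 * d * exp (-R / (2 * d * N)) := by
        rw [sum_const, card_univ, Fintype.card_fin, nsmul_eq_mul, ha_sq]
        field_simp

end Tail

section Fourier

open MeasureTheory Matrix

variable {d : ℕ}

lemma setIntegral_univ_pi_prod {ι 𝕜 : Type*} [Fintype ι] [RCLike 𝕜] (s : ι → Set ℝ)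
    (f : ι → ℝ → 𝕜) :
    ∫ x in Set.univ.pi s, ∏ i, f i (x i) = ∏ i, ∫ t in s i, f i t := by
  rw [volume_pi, Measure.restrict_pi_pi, integral_fintype_prod_eq_prod]

lemma setIntegral_Icc_exp_int_mul_I (k : ℤ) :
    ∫ t in Set.Icc (-π) π, Complex.exp ((k * t : ℝ) * Complex.I)
      = if k = 0 then 2 * (π : ℂ) else 0 := by
  rw [integral_Icc_eq_integral_Ioc, ← intervalIntegral.integral_of_le (by linarith [pi_pos])]
  split_ifs with hk
  · simp [hk]
    ring
  have hc : (k : ℂ) * Complex.I ≠ 0 := by simp [hk]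
  have hexp (t : ℝ) :
      Complex.exp ((k * t : ℝ) * Complex.I) = Complex.exp ((k : ℂ) * Complex.I * t) := by
    push_cast
    ring_nf
  have hperiodic : Complex.exp ((k : ℂ) * Complex.I * (π : ℝ))
      = Complex.exp ((k : ℂ) * Complex.I * (-π : ℝ)) := by
    rw [show (k : ℂ) * Complex.I * (π : ℝ) = (k : ℂ) * Complex.I * (-π : ℝ)
        + k * (2 * π * Complex.I) by push_cast; ring,
      Complex.exp_add, Complex.exp_int_mul_two_pi_mul_I, mul_one]
  simp only [hexp, integral_exp_mul_complex hc, hperiodic, sub_self, zero_div]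

def fundamentalCube (d : ℕ) : Set (Fin d → ℝ) := Set.univ.pi fun _ => Set.Icc (-π) π

lemma isCompact_fundamentalCube : IsCompact (fundamentalCube d) :=
  isCompact_univ_pi fun _ => isCompact_Icc

noncomputable def latticeChar (x : Fin d → ℤ) (θ : Fin d → ℝ) : ℂ :=
  Complex.exp ((toRealVec x ⬝ᵥ θ : ℝ) * Complex.I)

lemma latticeChar_add (x y : Fin d → ℤ) (θ : Fin d → ℝ) :
    latticeChar (x + y) θ = latticeChar x θ * latticeChar y θ := by
  simp only [latticeChar, ← Complex.exp_add, toRealVec, Pi.add_apply, Int.cast_add, dotProduct,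
    add_mul, sum_add_distrib]
  push_cast
  ring_nf

lemma latticeChar_eq_prod (x : Fin d → ℤ) (θ : Fin d → ℝ) :
    latticeChar x θ = ∏ i, Complex.exp ((x i * θ i : ℝ) * Complex.I) := by
  rw [latticeChar, ← Complex.exp_sum, dotProduct]
  push_cast
  simp only [toRealVec, sum_mul, Complex.ofReal_intCast]

lemma norm_latticeChar (x : Fin d → ℤ) (θ : Fin d → ℝ) : ‖latticeChar x θ‖ = 1 :=
  Complex.norm_exp_ofReal_mul_I _

lemma continuous_latticeChar (x : Fin d → ℤ) : Continuous (latticeChar x) := by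
  unfold latticeChar dotProduct
  fun_prop

noncomputable def stepCharFun (d : ℕ) (θ : Fin d → ℝ) : ℝ :=
  srwWeight d * (1 + 2 * ∑ i, cos (θ i))

lemma ofReal_stepCharFun (θ : Fin d → ℝ) :
    (stepCharFun d θ : ℂ) = srwWeight d * ∑ z ∈ srwSupport d, latticeChar z θ := by
  simp only [sum_srwSupport, latticeChar, toRealVec_single, single_dotProduct, stepCharFun]
  push_cast
  simp only [toRealVec_zero, zero_dotProduct, Complex.ofReal_zero, zero_mul, Complex.exp_zero,
    one_mul, neg_one_mul, Complex.exp_mul_I, Complex.cos_neg, Complex.sin_neg, mul_sum]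
  ring_nf

lemma ofReal_stepCharFun_mul_latticeChar (x : Fin d → ℤ) (θ : Fin d → ℝ) :
    (stepCharFun d θ : ℂ) * latticeChar (-x) θ
      = srwWeight d * ∑ z ∈ srwSupport d, latticeChar (-(x - z)) θ := by
  rw [ofReal_stepCharFun, mul_assoc, sum_mul]
  congr 1
  exact sum_congr rfl fun z _ => by rw [neg_sub, sub_eq_add_neg, latticeChar_add]

lemma continuous_stepCharFun : Continuous (stepCharFun d) := by
  unfold stepCharFun
  fun_prop

lemma setIntegral_stepCharFun_pow_mul_latticeChar (n : ℕ) (x : Fin d → ℤ) :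
    ∫ θ in fundamentalCube d, (stepCharFun d θ : ℂ) ^ n * latticeChar (-x) θ
      = (2 * π) ^ d * srwP d n x := by
  induction n generalizing x with
  | zero =>
    simp only [pow_zero, one_mul, latticeChar_eq_prod, fundamentalCube]
    rw [setIntegral_univ_pi_prod (fun _ => Set.Icc (-π) π)
      (fun i t => Complex.exp ((((-x) i : ℤ) * t : ℝ) * Complex.I))]
    simp only [setIntegral_Icc_exp_int_mul_I, Pi.neg_apply, neg_eq_zero, prod_ite_zero, mem_univ,
      forall_const, prod_const, card_univ, Fintype.card_fin, srwP_zero_apply]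
    by_cases hx : x = 0
    · simp [hx]
    · simpa [hx] using Function.ne_iff.1 hx
  | succ n ih =>
    have hstep (θ : Fin d → ℝ) : (stepCharFun d θ : ℂ) ^ (n + 1) * latticeChar (-x) θ
        = ∑ z ∈ srwSupport d,
            srwWeight d * ((stepCharFun d θ : ℂ) ^ n * latticeChar (-(x - z)) θ) := by
      rw [pow_succ, mul_assoc, ofReal_stepCharFun_mul_latticeChar, mul_sum, mul_sum]
      exact sum_congr rfl fun _ _ => by ring
    have hint (z : Fin d → ℤ) :
        IntegrableOn (fun θ => (stepCharFun d θ : ℂ) ^ n * latticeChar (-(x - z)) θ)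
          (fundamentalCube d) :=
      ((Complex.continuous_ofReal.comp continuous_stepCharFun).pow n |>.mul
        (continuous_latticeChar _)).continuousOn.integrableOn_compact isCompact_fundamentalCube
    simp only [hstep]
    rw [integral_finsetSum _ fun z _ => (hint z).const_mul _]
    simp only [integral_const_mul, ih, srwP_succ_eq]
    push_cast
    rw [mul_sum, mul_sum]
    exact sum_congr rfl fun _ _ => by ring

lemma sum_sq_le_of_mem_fundamentalCube {θ : Fin d → ℝ} (hθ : θ ∈ fundamentalCube d) :
    ∑ i, θ i ^ 2 ≤ d * π ^ 2 :=
  calc ∑ i, θ i ^ 2 ≤ ∑ _i : Fin d, π ^ 2 :=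
        sum_le_sum fun i _ => sq_le_sq' (hθ i (Set.mem_univ i)).1 (hθ i (Set.mem_univ i)).2
    _ = d * π ^ 2 := by simp

lemma stepCharFun_le {θ : Fin d → ℝ} (hθ : θ ∈ fundamentalCube d) :
    stepCharFun d θ ≤ 1 - 4 * srwWeight d / π ^ 2 * ∑ i, θ i ^ 2 := by
  have hcos : ∑ i, cos (θ i) ≤ ∑ i, (1 - 2 / π ^ 2 * θ i ^ 2) :=
    sum_le_sum fun i _ => cos_le_one_sub_mul_cos_sq (abs_le.2 (hθ i (Set.mem_univ i)))
  rw [sum_sub_distrib, ← mul_sum, sum_const, card_univ, Fintype.card_fin, nsmul_eq_mul,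
    mul_one] at hcos
  have := mul_le_mul_of_nonneg_left hcos (srwWeight_pos (d := d)).le
  rw [stepCharFun]
  linear_combination (2 : ℝ) * this + srwWeight_mul (d := d)

/-- Holding keeps `stepCharFun` away from `-1`; without it, `φ(π, …, π) = -1`. -/
lemma two_mul_srwWeight_sub_one_le_stepCharFun (θ : Fin d → ℝ) :
    2 * srwWeight d - 1 ≤ stepCharFun d θ := by
  have hcos : ∑ _i : Fin d, (-1 : ℝ) ≤ ∑ i, cos (θ i) := sum_le_sum fun i _ => neg_one_le_cos _
  rw [sum_const, card_univ, Fintype.card_fin, nsmul_eq_mul, mul_neg_one] at hcos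
  have := mul_le_mul_of_nonneg_left hcos (srwWeight_pos (d := d)).le
  rw [stepCharFun]
  linear_combination (2 : ℝ) * this + srwWeight_mul (d := d)

lemma exists_abs_stepCharFun_le (hd : 0 < d) :
    ∃ c > 0, ∀ θ ∈ fundamentalCube d, |stepCharFun d θ| ≤ exp (-c * ∑ i, θ i ^ 2) := by
  have hd1 : (1 : ℝ) ≤ d := Nat.one_le_cast.2 hd
  have hW := srwWeight_pos (d := d)
  have hpi := pi_pos
  refine ⟨2 * srwWeight d / (d * π ^ 2), by positivity, fun θ hθ => ?_⟩
  have hQ := sum_sq_le_of_mem_fundamentalCube hθ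
  have hQ0 : 0 ≤ ∑ i, θ i ^ 2 := sum_nonneg fun i _ => sq_nonneg _
  have hc : 2 * srwWeight d / (d * π ^ 2) ≤ 4 * srwWeight d / π ^ 2 := by
    rw [div_le_div_iff₀ (by positivity) (by positivity)]
    nlinarith [mul_pos hW (pow_pos hpi 2)]
  have hcQ : 2 * srwWeight d / (d * π ^ 2) * ∑ i, θ i ^ 2 ≤ 2 * srwWeight d := by
    rw [div_mul_eq_mul_div, div_le_iff₀ (by positivity)]
    nlinarith
  have hupper := stepCharFun_le hθ
  have hlower := two_mul_srwWeight_sub_one_le_stepCharFun (d := d) θ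
  refine (abs_le.2 ⟨?_, ?_⟩).trans (add_one_le_exp _)
  · linarith
  · nlinarith

lemma two_pi_pow_mul_srwP_le (n : ℕ) (x : Fin d → ℤ) :
    (2 * π) ^ d * srwP d n x ≤ ∫ θ in fundamentalCube d, |stepCharFun d θ| ^ n := by
  calc (2 * π) ^ d * srwP d n x
      = ‖∫ θ in fundamentalCube d, (stepCharFun d θ : ℂ) ^ n * latticeChar (-x) θ‖ := by
        rw [setIntegral_stepCharFun_pow_mul_latticeChar, norm_mul, norm_pow, Complex.norm_real,
          norm_mul, Complex.norm_ofNat, Complex.norm_real, Real.norm_of_nonneg pi_pos.le,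
          Real.norm_of_nonneg (srwP_nonneg n x)]
    _ ≤ ∫ θ in fundamentalCube d, ‖(stepCharFun d θ : ℂ) ^ n * latticeChar (-x) θ‖ :=
        norm_integral_le_integral_norm _
    _ = ∫ θ in fundamentalCube d, |stepCharFun d θ| ^ n := by
        simp only [norm_mul, norm_pow, Complex.norm_real, norm_latticeChar, mul_one,
          Real.norm_eq_abs]

lemma setIntegral_fundamentalCube_exp_neg_mul_sum_sq_le {b : ℝ} (hb : 0 < b) :
    ∫ θ in fundamentalCube d, exp (-b * ∑ i, θ i ^ 2) ≤ (π / b) ^ ((d : ℝ) / 2) := by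
  have hprod (θ : Fin d → ℝ) : exp (-b * ∑ i, θ i ^ 2) = ∏ i, exp (-b * θ i ^ 2) := by
    rw [mul_sum, exp_sum]
  simp only [hprod, fundamentalCube]
  rw [setIntegral_univ_pi_prod (fun _ => Set.Icc (-π) π) fun _ t => exp (-b * t ^ 2),
    prod_const, card_univ, Fintype.card_fin]
  calc (∫ t in Set.Icc (-π) π, exp (-b * t ^ 2)) ^ d ≤ (∫ t, exp (-b * t ^ 2)) ^ d := by
        refine pow_le_pow_left₀ (setIntegral_nonneg measurableSet_Icc fun _ _ => (exp_pos _).le)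
          (setIntegral_le_integral (integrable_exp_neg_mul_sq hb)
            (Filter.Eventually.of_forall fun _ => (exp_pos _).le)) d
    _ = (π / b) ^ ((d : ℝ) / 2) := by
        rw [integral_gaussian, sqrt_eq_rpow, ← rpow_natCast, ← rpow_mul (by positivity)]
        ring_nf

lemma exists_srwP_le_mul_rpow (hd : 0 < d) :
    ∃ K > 0, ∀ n : ℕ, 0 < n → ∀ x : Fin d → ℤ, srwP d n x ≤ K * (n : ℝ) ^ (-(d : ℝ) / 2) := by
  obtain ⟨c, hc, hφ⟩ := exists_abs_stepCharFun_le hd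
  have hpi := pi_pos
  refine ⟨(π / c) ^ ((d : ℝ) / 2) / (2 * π) ^ d, by positivity, fun n hn x => ?_⟩
  have hnpos : (0 : ℝ) < n := Nat.cast_pos.2 hn
  have hcont : Continuous fun θ : Fin d → ℝ => exp (-(c * n) * ∑ i, θ i ^ 2) := by fun_prop
  have hmono : ∫ θ in fundamentalCube d, |stepCharFun d θ| ^ n
      ≤ ∫ θ in fundamentalCube d, exp (-(c * n) * ∑ i, θ i ^ 2) := by
    refine setIntegral_mono_on ((continuous_abs.comp continuous_stepCharFun).pow n
      |>.continuousOn.integrableOn_compact isCompact_fundamentalCube)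
      (hcont.continuousOn.integrableOn_compact isCompact_fundamentalCube)
      (isCompact_fundamentalCube.isClosed.measurableSet) fun θ hθ => ?_
    calc |stepCharFun d θ| ^ n ≤ exp (-c * ∑ i, θ i ^ 2) ^ n :=
          pow_le_pow_left₀ (abs_nonneg _) (hφ θ hθ) n
      _ = exp (-(c * n) * ∑ i, θ i ^ 2) := by rw [← exp_nat_mul]; ring_nf
  have hbound := ((two_pi_pow_mul_srwP_le n x).trans hmono).trans
    (setIntegral_fundamentalCube_exp_neg_mul_sum_sq_le (mul_pos hc hnpos))
  rw [div_mul_eq_mul_div, le_div_iff₀ (by positivity), mul_comm]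
  calc (2 * π) ^ d * srwP d n x ≤ (π / (c * n)) ^ ((d : ℝ) / 2) := hbound
    _ = (π / c) ^ ((d : ℝ) / 2) * (n : ℝ) ^ (-(d : ℝ) / 2) := by
        rw [← div_div, div_rpow (by positivity) hnpos.le, neg_div, rpow_neg hnpos.le,
          div_eq_mul_inv]

end Fourier

section OffDiagonal

variable {d : ℕ}

lemma latNorm_sq_add_le (y z : Fin d → ℤ) :
    latNorm (y + z) ^ 2 ≤ 2 * (latNorm y ^ 2 + latNorm z ^ 2) := by
  simp only [latNorm_sq, mul_add, mul_sum, ← sum_add_distrib, Pi.add_apply, Int.cast_add]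
  exact sum_le_sum fun i _ => by nlinarith [sq_nonneg ((y i : ℝ) - z i)]

lemma exp_neg_div_le_exp_neg_div {S a b : ℝ} (hS : 0 ≤ S) (ha : 0 < a) (hab : a ≤ b) :
    exp (-S / a) ≤ exp (-S / b) := by
  rw [exp_le_exp, neg_div, neg_div, neg_le_neg_iff]
  exact div_le_div_of_nonneg_left hS ha hab

lemma srwP_add_le (hd : 0 < d) {m k : ℕ} (hm : 0 < m) (hk : 0 < k) {D : ℝ}
    (hDm : ∀ y, srwP d m y ≤ D) (hDk : ∀ y, srwP d k y ≤ D) (x : Fin d → ℤ) :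
    srwP d (m + k) x ≤ 4 * d * D * exp (-latNorm x ^ 2 / (8 * d * (m + k))) := by
  classical
  have hdpos : (0 : ℝ) < d := Nat.cast_pos.2 hd
  have hD : 0 ≤ D := (srwP_nonneg m 0).trans (hDm 0)
  set S := latNorm x ^ 2
  have hS : 0 ≤ S / 4 := by positivity
  have htail {j : ℕ} (hj : 0 < j) (hjle : j ≤ m + k) :
      2 * d * exp (-(S / 4) / (2 * d * j)) ≤ 2 * d * exp (-S / (8 * d * (m + k))) := by
    have hjpos : (0 : ℝ) < j := Nat.cast_pos.2 hj
    have hjle' : (j : ℝ) ≤ m + k := by exact_mod_cast hjle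
    rw [show -(S / 4) / (2 * d * j) = -S / (8 * d * j) by ring]
    gcongr 2 * d * ?_
    exact exp_neg_div_le_exp_neg_div (by positivity) (by positivity) (by gcongr)
  rw [srwP_add, ← sum_filter_add_sum_filter_not _ fun y => S / 4 ≤ latNorm y ^ 2]
  calc _ ≤ D * ∑ y ∈ latticeBox d m with S / 4 ≤ latNorm y ^ 2, srwP d m y
        + D * ∑ y ∈ latticeBox d m with ¬S / 4 ≤ latNorm y ^ 2, srwP d k (x - y) := by
        rw [mul_sum, mul_sum]
        exact add_le_add
          (sum_le_sum fun y _ => by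
            rw [mul_comm D]; exact mul_le_mul_of_nonneg_left (hDk _) (srwP_nonneg m y))
          (sum_le_sum fun y _ => mul_le_mul_of_nonneg_right (hDm y) (srwP_nonneg k _))
    _ ≤ D * (2 * d * exp (-S / (8 * d * (m + k))))
        + D * (2 * d * exp (-S / (8 * d * (m + k)))) := by
        gcongr
        · exact (sum_srwP_le_of_le_latNorm_sq hd hm hS fun y hy => (mem_filter.1 hy).2).trans
            (htail hm (Nat.le_add_right m k))
        · rw [← sum_image fun _ _ _ _ h => sub_right_injective h]
          refine (sum_srwP_le_of_le_latNorm_sq hd hk hS fun u hu => ?_).trans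
            (htail hk (Nat.le_add_left k m))
          obtain ⟨y, hy, rfl⟩ := mem_image.1 hu
          have := latNorm_sq_add_le y (x - y)
          rw [add_sub_cancel] at this
          linarith [not_le.1 (mem_filter.1 hy).2]
    _ = 4 * d * D * exp (-S / (8 * d * (m + k))) := by ring

lemma latNorm_sq_le_of_mem_latticeBox {n : ℕ} {x : Fin d → ℤ} (hx : x ∈ latticeBox d n) :
    latNorm x ^ 2 ≤ d * n ^ 2 := by
  rw [latNorm_sq]
  calc ∑ i, (x i : ℝ) ^ 2 ≤ ∑ _i : Fin d, (n : ℝ) ^ 2 := sum_le_sum fun i _ => by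
        rw [← sq_abs]
        have : |(x i : ℝ)| ≤ n := by exact_mod_cast mem_latticeBox.1 hx i
        gcongr
    _ = d * n ^ 2 := by simp

lemma rpow_neg_le_mul_rpow_neg {a b c r : ℝ} (ha : 0 < a) (hb : 0 < b) (hab : b ≤ c * a)
    (hr : 0 ≤ r) : a ^ (-r) ≤ c ^ r * b ^ (-r) := by
  have hc : 0 < c := pos_of_mul_pos_left (hb.trans_le hab) ha.le
  rw [rpow_neg ha.le, rpow_neg hb.le, ← div_eq_mul_inv, ← inv_rpow ha.le, ← div_rpow hc.le hb.le]
  refine rpow_le_rpow (inv_nonneg.2 ha.le) ?_ hr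
  rw [inv_le_comm₀ ha (div_pos hc hb), inv_div, div_le_iff₀' hc]
  exact hab

lemma srwP_one_le_mul_exp (hd : 0 < d) {K : ℝ} (hK : ∀ y, srwP d 1 y ≤ K) (x : Fin d → ℤ) :
    srwP d 1 x ≤ K * exp (1 / 8) * exp (-latNorm x ^ 2 / (8 * d)) := by
  have hK0 : 0 ≤ K := (srwP_nonneg 1 x).trans (hK x)
  by_cases hx : x ∈ latticeBox d 1
  · have hS := latNorm_sq_le_of_mem_latticeBox hx
    have hexp : exp (-1 / 8) ≤ exp (-latNorm x ^ 2 / (8 * d)) := by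
      rw [exp_le_exp, div_le_div_iff₀ (by norm_num) (by positivity)]
      push_cast at hS
      nlinarith
    calc srwP d 1 x ≤ K * exp (1 / 8) * exp (-1 / 8) := by
          rw [mul_assoc, ← exp_add]
          norm_num
          exact hK x
      _ ≤ _ := by gcongr
  · rw [srwP_eq_zero_of_notMem hx]
    positivity

lemma srwP_le_mul_rpow_mul_exp_of_two_le (hd : 0 < d) {K : ℝ}
    (hdiag : ∀ n : ℕ, 0 < n → ∀ x : Fin d → ℤ, srwP d n x ≤ K * (n : ℝ) ^ (-(d : ℝ) / 2))
    {n : ℕ} (hn : 2 ≤ n) (x : Fin d → ℤ) :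
    srwP d n x ≤ 4 * d * (3 ^ ((d : ℝ) / 2) * K) * (n : ℝ) ^ (-(d : ℝ) / 2)
      * exp (-latNorm x ^ 2 / (8 * d * n)) := by
  obtain ⟨m, k, hm, hk, rfl, h3m, h3k⟩ :
      ∃ m k, 0 < m ∧ 0 < k ∧ m + k = n ∧ n ≤ 3 * m ∧ n ≤ 3 * k :=
    ⟨n / 2, n - n / 2, by omega, by omega, by omega, by omega, by omega⟩
  have hsup {j : ℕ} (hj : 0 < j) (h3j : m + k ≤ 3 * j) (y : Fin d → ℤ) :
      srwP d j y ≤ 3 ^ ((d : ℝ) / 2) * K * ((m + k : ℕ) : ℝ) ^ (-(d : ℝ) / 2) := by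
    refine (hdiag j hj y).trans ?_
    have hK : 0 ≤ K := by
      have := (srwP_nonneg j y).trans (hdiag j hj y)
      exact nonneg_of_mul_nonneg_left this (by positivity)
    rw [mul_comm (3 ^ _ : ℝ), mul_assoc, neg_div]
    gcongr
    exact rpow_neg_le_mul_rpow_neg (Nat.cast_pos.2 hj) (by positivity)
      (by exact_mod_cast h3j) (by positivity)
  convert srwP_add_le hd hm hk (hsup hm h3m) (hsup hk h3k) x using 1
  push_cast
  ring

lemma exists_srwP_le_mul_rpow_mul_exp (hd : 0 < d) :
    ∃ K > 0, ∀ n : ℕ, 0 < n → ∀ x : Fin d → ℤ,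
      srwP d n x ≤ K * (n : ℝ) ^ (-(d : ℝ) / 2) * exp (-latNorm x ^ 2 / (8 * d * n)) := by
  obtain ⟨K₀, hK₀, hdiag⟩ := exists_srwP_le_mul_rpow hd
  refine ⟨max (K₀ * exp (1 / 8)) (4 * d * (3 ^ ((d : ℝ) / 2) * K₀)),
    lt_max_of_lt_left (by positivity), fun n hn x => ?_⟩
  obtain rfl | hn2 : n = 1 ∨ 2 ≤ n := by omega
  · refine (srwP_one_le_mul_exp hd (fun y => by simpa using hdiag 1 one_pos y) x).trans ?_
    simp only [Nat.cast_one, one_rpow, mul_one]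
    gcongr
    exact le_max_left _ _
  · refine (srwP_le_mul_rpow_mul_exp_of_two_le hd hdiag hn2 x).trans ?_
    gcongr
    exact le_max_right _ _

end OffDiagonal

lemma gauss_smul_toRealVec {d : ℕ} {t : ℝ} (ht : 0 ≤ t) (β : ℝ) (x : Fin d → ℤ) :
    gauss d t (β • toRealVec x)
      = (2 * π) ^ (-(d : ℝ) / 2) * t ^ (-(d : ℝ) / 2)
        * exp (-(β ^ 2 * latNorm x ^ 2) / (2 * t)) := by
  rw [gauss, mul_rpow (by positivity) ht, latNorm_sq, mul_sum]
  simp [toRealVec, mul_pow]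

lemma rpow_mul_exp_le_gauss_smul {d : ℕ} (hd : 0 < d) {t : ℝ} (ht : 0 < t) {β : ℝ} (hβ : 0 ≤ β)
    (hβle : β ≤ (2 * √d)⁻¹) (x : Fin d → ℤ) :
    t ^ (-(d : ℝ) / 2) * exp (-latNorm x ^ 2 / (8 * d * t))
      ≤ (2 * π) ^ ((d : ℝ) / 2) * gauss d t (β • toRealVec x) := by
  have hdpos : (0 : ℝ) < d := Nat.cast_pos.2 hd
  have hβsq : β ^ 2 * (4 * d) ≤ 1 := by
    have := pow_le_pow_left₀ hβ hβle 2
    rw [inv_pow, mul_pow, sq_sqrt hdpos.le, ← one_div, le_div_iff₀ (by positivity)] at this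
    linarith
  have hexp : -latNorm x ^ 2 / (8 * d * t) ≤ -(β ^ 2 * latNorm x ^ 2) / (2 * t) := by
    rw [neg_div, neg_div, neg_le_neg_iff, div_le_div_iff₀ (by positivity) (by positivity)]
    have := sq_nonneg (latNorm x)
    nlinarith [mul_nonneg this ht.le]
  have hcancel : (2 * π) ^ ((d : ℝ) / 2) * (2 * π) ^ (-(d : ℝ) / 2) = 1 := by
    rw [← rpow_add (by positivity)]
    simp [neg_div]
  rw [gauss_smul_toRealVec ht.le, ← mul_assoc, ← mul_assoc, hcancel, one_mul]
  gcongr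

/-- `P_n(x) ≤ C φ_n(βx)` for all sufficiently small `β > 0`. -/
theorem srwP_le_gauss (d : ℕ) (hd : 1 ≤ d) :
    ∃ β₀ > (0 : ℝ), ∀ β : ℝ, 0 < β → β ≤ β₀ →
      ∃ C > (0 : ℝ), ∀ n : ℕ, 1 ≤ n → ∀ x : Fin d → ℤ,
        srwP d n x ≤ C * gauss d n (β • toRealVec x) := by
  obtain ⟨K, hK, hbound⟩ := exists_srwP_le_mul_rpow_mul_exp hd
  refine ⟨(2 * √d)⁻¹, by positivity, fun β hβ hβle =>
    ⟨K * (2 * π) ^ ((d : ℝ) / 2), by positivity, fun n hn x => ?_⟩⟩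
  calc srwP d n x ≤ K * ((n : ℝ) ^ (-(d : ℝ) / 2) * exp (-latNorm x ^ 2 / (8 * d * n))) := by
        rw [← mul_assoc]
        exact hbound n hn x
    _ ≤ K * ((2 * π) ^ ((d : ℝ) / 2) * gauss d n (β • toRealVec x)) :=
        mul_le_mul_of_nonneg_left
          (rpow_mul_exp_le_gauss_smul hd (Nat.cast_pos.2 hn) hβ.le hβle x) hK.le
    _ = K * (2 * π) ^ ((d : ℝ) / 2) * gauss d n (β • toRealVec x) := by ring
end

section
/- Let d ≥ 1, let φ_n be the Gaussian kernel on R^d, and set Φ_n(x, y) = φ_n(x) + φ_n(y). Then there exists β₀ > 0 such that for every β ∈ (0, β₀] there is a constant C = C(β) > 0 with: for all integers n ≥ 1 and all x, y ∈ R^d, |φ_n(x) − φ_n(y)| ≤ C · min(|x − y|/√n, 1) · Φ_n(βx, βy). -/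
open scoped BigOperators

/-! Writing `φ_t(x) = (2πt)^{-d/2} g(|x|/√t)` with `g(u) = exp(-u²/2)` reduces the estimate to the
radial profile `g`. For `0 ≤ u ≤ v` with `v - u ≤ σ < 1`, convexity of `exp` gives
`g(u) - g(v) ≤ (v² - u²)/2 · g(u) ≤ σ (u + 1/2) g(u)`, and the polynomial factor `u + 1/2` is
absorbed by giving up part of the Gaussian decay: `(u + 1/2) g(u) ≤ 6 g(u/2) ≤ 6 g(βu)` for
`|β| ≤ 1/2`. For `σ ≥ 1` the bound is simply `g(u) ≤ g(βu)`. -/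

open Real

lemma exp_neg_sub_exp_neg_le (A B : ℝ) :
    exp (-A) - exp (-B) ≤ (B - A) * exp (-A) := by
  have hB : exp (-B) = exp (-(B - A)) * exp (-A) := by rw [← exp_add]; ring_nf
  nlinarith [add_one_le_exp (-(B - A)), exp_pos (-A)]

lemma add_half_mul_exp_neg_sq_le (u : ℝ) :
    (u + 1 / 2) * exp (-u ^ 2 / 2) ≤ 6 * exp (-u ^ 2 / 8) := by
  have hpoly : u + 1 / 2 ≤ 6 * exp (3 * u ^ 2 / 8) := by
    nlinarith [add_one_le_exp (3 * u ^ 2 / 8)]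
  calc (u + 1 / 2) * exp (-u ^ 2 / 2) ≤ 6 * exp (3 * u ^ 2 / 8) * exp (-u ^ 2 / 2) := by
        gcongr
    _ = 6 * exp (-u ^ 2 / 8) := by rw [mul_assoc, ← exp_add]; ring_nf

section Profile

variable {u v σ β : ℝ}

lemma exp_neg_sq_sub_exp_neg_sq_le (hβ : β ^ 2 ≤ 1 / 4) (hu : 0 ≤ u) (huv : u ≤ v)
    (hσ : v - u ≤ σ) :
    exp (-u ^ 2 / 2) - exp (-v ^ 2 / 2) ≤ 6 * min σ 1 * exp (-(β * u) ^ 2 / 2) := by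
  have hdecay : exp (-u ^ 2 / 8) ≤ exp (-(β * u) ^ 2 / 2) :=
    exp_le_exp.2 (by nlinarith [sq_nonneg u])
  rcases le_total 1 σ with hσ1 | hσ1
  · have hu8 : exp (-u ^ 2 / 2) ≤ exp (-u ^ 2 / 8) := exp_le_exp.2 (by nlinarith [sq_nonneg u])
    rw [min_eq_right hσ1]
    linarith [exp_pos (-v ^ 2 / 2), exp_pos (-(β * u) ^ 2 / 2)]
  · have hσ0 : 0 ≤ σ := by linarith
    rw [min_eq_left hσ1]
    calc exp (-u ^ 2 / 2) - exp (-v ^ 2 / 2)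
        ≤ (v ^ 2 / 2 - u ^ 2 / 2) * exp (-u ^ 2 / 2) := by
          simpa only [neg_div] using exp_neg_sub_exp_neg_le (u ^ 2 / 2) (v ^ 2 / 2)
      _ ≤ σ * ((u + 1 / 2) * exp (-u ^ 2 / 2)) := by
          rw [← mul_assoc]; gcongr; nlinarith
      _ ≤ σ * (6 * exp (-u ^ 2 / 8)) := by gcongr ?_ * ?_; exact add_half_mul_exp_neg_sq_le u
      _ ≤ 6 * σ * exp (-(β * u) ^ 2 / 2) := by rw [mul_left_comm, ← mul_assoc]; gcongr

lemma abs_exp_neg_sq_sub_exp_neg_sq_le (hβ : β ^ 2 ≤ 1 / 4) (hu : 0 ≤ u) (hv : 0 ≤ v)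
    (hσ : |u - v| ≤ σ) :
    |exp (-u ^ 2 / 2) - exp (-v ^ 2 / 2)| ≤
      6 * min σ 1 * (exp (-(β * u) ^ 2 / 2) + exp (-(β * v) ^ 2 / 2)) := by
  wlog huv : u ≤ v generalizing u v
  · rw [abs_sub_comm, add_comm]
    exact this hv hu (by rwa [abs_sub_comm]) (le_of_not_ge huv)
  have hmono : exp (-v ^ 2 / 2) ≤ exp (-u ^ 2 / 2) := exp_le_exp.2 (by nlinarith)
  have hmin : 0 ≤ min σ 1 := le_min ((abs_nonneg _).trans hσ) zero_le_one
  have hdiff :=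
    exp_neg_sq_sub_exp_neg_sq_le hβ hu huv ((le_abs_self _).trans (abs_sub_comm u v ▸ hσ))
  rw [abs_of_nonneg (sub_nonneg.2 hmono)]
  nlinarith [exp_pos (-(β * v) ^ 2 / 2)]

end Profile

section Gaussian

variable {d : ℕ} {t : ℝ}

lemma gauss_eq_mul_exp_neg_sq (ht : 0 < t) (x : Fin d → ℝ) :
    gauss d t x =
      (2 * π * t) ^ (-(d : ℝ) / 2) * exp (-(‖WithLp.toLp 2 x‖ / √t) ^ 2 / 2) := by
  rw [gauss, div_pow, EuclideanSpace.real_norm_sq_eq, sq_sqrt ht.le]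
  congr 2
  field_simp

lemma sqrt_sum_sq_sub_eq_norm (x y : Fin d → ℝ) :
    √(∑ i, (x i - y i) ^ 2) = ‖WithLp.toLp 2 x - WithLp.toLp 2 y‖ := by
  rw [← WithLp.toLp_sub, EuclideanSpace.norm_eq]
  simp [sq_abs]

theorem abs_gauss_sub_gauss_le {β : ℝ} (ht : 0 < t) (hβ : |β| ≤ 1 / 2) (x y : Fin d → ℝ) :
    |gauss d t x - gauss d t y| ≤
      6 * min (‖WithLp.toLp 2 x - WithLp.toLp 2 y‖ / √t) 1 *
        (gauss d t (β • x) + gauss d t (β • y)) := by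
  have hscale : ∀ z : Fin d → ℝ,
      ‖WithLp.toLp 2 (β • z)‖ / √t = |β| * (‖WithLp.toLp 2 z‖ / √t) := by
    intro z
    rw [WithLp.toLp_smul, norm_smul, norm_eq_abs, mul_div_assoc]
  have hβ2 : |β| ^ 2 ≤ 1 / 4 := by nlinarith [abs_nonneg β]
  have hnorms : |‖WithLp.toLp 2 x‖ / √t - ‖WithLp.toLp 2 y‖ / √t| ≤
      ‖WithLp.toLp 2 x - WithLp.toLp 2 y‖ / √t := by
    rw [← sub_div, abs_div, abs_of_pos (sqrt_pos.2 ht)]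
    gcongr
    exact abs_norm_sub_norm_le _ _
  have hK : 0 < (2 * π * t) ^ (-(d : ℝ) / 2) := rpow_pos_of_pos (by positivity) _
  simp only [gauss_eq_mul_exp_neg_sq ht, hscale]
  rw [← mul_sub, abs_mul, abs_of_pos hK]
  exact (mul_le_mul_of_nonneg_left (abs_exp_neg_sq_sub_exp_neg_sq_le hβ2 (by positivity)
    (by positivity) hnorms) hK.le).trans_eq (by ring)

end Gaussian

theorem gauss_diff_le_general (d : ℕ) :
    ∃ β₀ > (0 : ℝ), ∀ β : ℝ, 0 < β → β ≤ β₀ →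
      ∃ C > (0 : ℝ), ∀ n : ℕ, 1 ≤ n → ∀ x y : Fin d → ℝ,
        |gauss d n x - gauss d n y| ≤
          C * min (Real.sqrt (∑ i, (x i - y i) ^ 2) / Real.sqrt n) 1 *
            (gauss d n (β • x) + gauss d n (β • y)) := by
  refine ⟨1 / 2, by norm_num, fun β hβ hβ₀ => ⟨6, by norm_num, fun n hn x y => ?_⟩⟩
  rw [sqrt_sum_sq_sub_eq_norm]
  exact abs_gauss_sub_gauss_le (by exact_mod_cast hn) (by rwa [abs_of_pos hβ]) x y

/-- difference estimate for the Gaussian kernel on `ℝ^d`: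
`|φ_n(x) − φ_n(y)| ≤ C min(|x−y|/√n, 1) Φ_n(βx, βy)`. -/
theorem gauss_diff_le (d : ℕ) (hd : 1 ≤ d) :
    ∃ β₀ > (0 : ℝ), ∀ β : ℝ, 0 < β → β ≤ β₀ →
      ∃ C > (0 : ℝ), ∀ n : ℕ, 1 ≤ n → ∀ x y : Fin d → ℝ,
        |gauss d n x - gauss d n y| ≤
          C * min (Real.sqrt (∑ i, (x i - y i) ^ 2) / Real.sqrt n) 1 *
            (gauss d n (β • x) + gauss d n (β • y)) :=
  gauss_diff_le_general d
end

section
/- Let d ≥ 1 and let φ_t be the Gaussian kernel on R^d. Then there exists a constant C = C(d) > 0 such that for all integers m, l ≥ 1 and all x, y ∈ R^d: φ_m(x) φ_l(y) ≤ C (ml)^{−d/4} ( φ_{⌈2ml/(m+l)⌉}(x) + φ_{⌈2ml/(m+l)⌉}(y) ), where ⌈·⌉ denotes the ceiling function. -/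
open scoped BigOperators

/-! Assume `m ≤ l` and let `t = ⌈2ml/(m+l)⌉`, the rounded-up harmonic mean, so that
`m ≤ t ≤ 2√(ml)`. Widening a Gaussian from time `m` to time `t` costs at most the factor
`(t/m)^{d/2}`, and `φ_l(y)` is at most its peak value `(2πl)^{-d/2}`; hence
`φ_m(x) φ_l(y) ≤ (t / (2πml))^{d/2} φ_t(x) ≤ (ml)^{-d/4} φ_t(x)`, which gives the claim with `C = 1`. -/

lemma gauss_nonneg (d : ℕ) {t : ℝ} (ht : 0 ≤ t) (x : Fin d → ℝ) : 0 ≤ gauss d t x := by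
  unfold gauss
  positivity

lemma gauss_le_rpow (d : ℕ) {t : ℝ} (ht : 0 < t) (x : Fin d → ℝ) :
    gauss d t x ≤ (2 * Real.pi * t) ^ (-(d : ℝ) / 2) := by
  refine mul_le_of_le_one_right (by positivity) (Real.exp_le_one_iff.2 ?_)
  exact div_nonpos_of_nonpos_of_nonneg (neg_nonpos.2 (by positivity)) (by positivity)

lemma gauss_le_rpow_div_mul_gauss (d : ℕ) {s t : ℝ} (hs : 0 < s) (hst : s ≤ t)
    (x : Fin d → ℝ) : gauss d s x ≤ (t / s) ^ ((d : ℝ) / 2) * gauss d t x := by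
  have ht : 0 < t := hs.trans_le hst
  have hvol : (2 * Real.pi * s) ^ (-(d : ℝ) / 2)
      = (t / s) ^ ((d : ℝ) / 2) * (2 * Real.pi * t) ^ (-(d : ℝ) / 2) := by
    rw [show 2 * Real.pi * s = (2 * Real.pi * t) / (t / s) by field_simp,
      Real.div_rpow (by positivity) (by positivity), neg_div, Real.rpow_neg (by positivity),
      Real.rpow_neg (by positivity)]
    field_simp
  have hexp : -(∑ i, (x i) ^ 2) / (2 * s) ≤ -(∑ i, (x i) ^ 2) / (2 * t) := by
    rw [neg_div, neg_div, neg_le_neg_iff]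
    exact div_le_div_of_nonneg_left (by positivity) (by positivity) (by linarith)
  unfold gauss
  rw [hvol, mul_assoc]
  gcongr

lemma le_harmonicMean_of_le {m l : ℝ} (hm : 0 < m) (hml : m ≤ l) :
    m ≤ 2 * m * l / (m + l) := by
  rw [le_div_iff₀ (by linarith)]; nlinarith

lemma harmonicMean_le_sqrt {m l : ℝ} (hm : 0 < m) (hl : 0 < l) :
    2 * m * l / (m + l) ≤ Real.sqrt (m * l) := by
  rw [div_le_iff₀ (by linarith)]
  have hsq := Real.mul_self_sqrt (mul_pos hm hl).le
  nlinarith [sq_nonneg (m - l), sq_nonneg (2 * Real.sqrt (m * l) - (m + l)), Real.sqrt_nonneg (m * l)]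

lemma natCeil_harmonicMean_le_two_mul_sqrt {m l : ℝ} (hm : 1 ≤ m) (hml : m ≤ l) :
    (⌈2 * m * l / (m + l)⌉₊ : ℝ) ≤ 2 * Real.sqrt (m * l) := by
  have h1 : 1 ≤ 2 * m * l / (m + l) := hm.trans (le_harmonicMean_of_le (by linarith) hml)
  have h2 := harmonicMean_le_sqrt (by linarith : 0 < m) (by linarith : 0 < l)
  linarith [Nat.ceil_lt_add_one (zero_le_one.trans h1)]

lemma rpow_mul_rpow_le_of_le_two_mul_sqrt (d : ℕ) {m l t : ℝ} (hm : 0 < m) (hl : 0 < l)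
    (ht : 0 ≤ t) (hts : t ≤ 2 * Real.sqrt (m * l)) :
    (t / m) ^ ((d : ℝ) / 2) * (2 * Real.pi * l) ^ (-(d : ℝ) / 2) ≤ (m * l) ^ (-(d : ℝ) / 4) := by
  have hml : 0 < m * l := mul_pos hm hl
  have hlhs : (t / m) ^ ((d : ℝ) / 2) * (2 * Real.pi * l) ^ (-(d : ℝ) / 2)
      = (t / (2 * Real.pi * m * l)) ^ ((d : ℝ) / 2) := by
    rw [neg_div, Real.rpow_neg (by positivity), ← Real.inv_rpow (by positivity),
      ← Real.mul_rpow (by positivity) (by positivity)]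
    congr 1
    field_simp
  have hrhs : (m * l) ^ (-(d : ℝ) / 4) = ((Real.sqrt (m * l))⁻¹) ^ ((d : ℝ) / 2) := by
    rw [Real.sqrt_eq_rpow, ← Real.rpow_neg hml.le, ← Real.rpow_mul hml.le]
    ring_nf
  rw [hlhs, hrhs]
  refine Real.rpow_le_rpow (by positivity) ?_ (by positivity)
  have hcancel : (Real.sqrt (m * l))⁻¹ * (2 * Real.pi * m * l) = 2 * Real.pi * Real.sqrt (m * l) := by
    have hsq := Real.mul_self_sqrt hml.le
    field_simp
    linarith
  rw [div_le_iff₀ (by positivity), hcancel]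
  nlinarith [Real.pi_gt_three]

lemma gauss_mul_gauss_le_of_le (d : ℕ) {m l : ℝ} (hm : 1 ≤ m) (hml : m ≤ l) (x y : Fin d → ℝ) :
    gauss d m x * gauss d l y ≤
      (m * l) ^ (-(d : ℝ) / 4) * gauss d (⌈2 * m * l / (m + l)⌉₊ : ℕ) x := by
  set t : ℝ := ((⌈2 * m * l / (m + l)⌉₊ : ℕ) : ℝ)
  have hm0 : 0 < m := by linarith
  have hmt : m ≤ t := (le_harmonicMean_of_le hm0 hml).trans (Nat.le_ceil _)
  calc gauss d m x * gauss d l y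
      ≤ ((t / m) ^ ((d : ℝ) / 2) * gauss d t x) * (2 * Real.pi * l) ^ (-(d : ℝ) / 2) :=
        mul_le_mul (gauss_le_rpow_div_mul_gauss d hm0 hmt x) (gauss_le_rpow d (by linarith) y)
          (gauss_nonneg d (by linarith) y)
          (mul_nonneg (by positivity) (gauss_nonneg d (by linarith) x))
    _ = (t / m) ^ ((d : ℝ) / 2) * (2 * Real.pi * l) ^ (-(d : ℝ) / 2) * gauss d t x := by ring
    _ ≤ (m * l) ^ (-(d : ℝ) / 4) * gauss d t x := by
        gcongr
        · exact gauss_nonneg d (by positivity) x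
        · exact rpow_mul_rpow_le_of_le_two_mul_sqrt d hm0 (by linarith) (by positivity)
            (natCeil_harmonicMean_le_two_mul_sqrt hm hml)

lemma gauss_mul_gauss_le (d : ℕ) {m l : ℝ} (hm : 1 ≤ m) (hl : 1 ≤ l) (x y : Fin d → ℝ) :
    gauss d m x * gauss d l y ≤
      (m * l) ^ (-(d : ℝ) / 4) *
        (gauss d (⌈2 * m * l / (m + l)⌉₊ : ℕ) x + gauss d (⌈2 * m * l / (m + l)⌉₊ : ℕ) y) := by
  have hgauss_nonneg (z : Fin d → ℝ) : 0 ≤ gauss d (⌈2 * m * l / (m + l)⌉₊ : ℕ) z :=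
    gauss_nonneg d (Nat.cast_nonneg _) z
  rcases le_total m l with hml | hlm
  · grw [gauss_mul_gauss_le_of_le d hm hml x y, ← le_add_of_nonneg_right (hgauss_nonneg y)]
  · have hsymm := gauss_mul_gauss_le_of_le d hl hlm y x
    rw [mul_comm, mul_comm l, add_comm l, mul_right_comm 2 l m] at hsymm
    grw [hsymm, ← le_add_of_nonneg_left (hgauss_nonneg x)]

theorem gauss_mul_le_general (d : ℕ) :
    ∃ C > (0 : ℝ), ∀ m l : ℕ, 1 ≤ m → 1 ≤ l → ∀ x y : Fin d → ℝ,
      gauss d m x * gauss d l y ≤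
        C * ((m : ℝ) * l) ^ (-(d : ℝ) / 4) *
          (gauss d (⌈(2 * (m : ℝ) * l) / ((m : ℝ) + l)⌉₊ : ℕ) x +
           gauss d (⌈(2 * (m : ℝ) * l) / ((m : ℝ) + l)⌉₊ : ℕ) y) := by
  refine ⟨1, one_pos, fun m l hm hl x y => ?_⟩
  rw [one_mul]
  exact gauss_mul_gauss_le d (Nat.one_le_cast.2 hm) (Nat.one_le_cast.2 hl) x y

/-- product of Gaussian kernels:
`φ_m(x) φ_l(y) ≤ C (ml)^{−d/4} (φ_{⌈2ml/(m+l)⌉}(x) + φ_{⌈2ml/(m+l)⌉}(y))`. -/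
theorem gauss_mul_le (d : ℕ) (hd : 1 ≤ d) :
    ∃ C > (0 : ℝ), ∀ m l : ℕ, 1 ≤ m → 1 ≤ l → ∀ x y : Fin d → ℝ,
      gauss d m x * gauss d l y ≤
        C * ((m : ℝ) * l) ^ (-(d : ℝ) / 4) *
          (gauss d (⌈(2 * (m : ℝ) * l) / ((m : ℝ) + l)⌉₊ : ℕ) x +
           gauss d (⌈(2 * (m : ℝ) * l) / ((m : ℝ) + l)⌉₊ : ℕ) y) :=
  gauss_mul_le_general d
end

section
/- Let d ≥ 1, β > 0, and let φ_n be the Gaussian kernel on R^d. Then there exists a constant C = C(β, d) > 0 such that for all integers i, j ≥ 1 and all x ∈ Z^d: Σ_{y∈Z^d} φ_i(βy) φ_j(β(x − y)) ≤ C φ_{i+j}(βx/2). -/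
open scoped BigOperators

/-!
Both sides factor over the coordinates, so it suffices to treat `d = 1`. There, for `s ≤ t`,
completing the square gives `φ_s(u) φ_t(v) ≤ 2 φ_{s+t}((u+v)/2) φ_{2s}(u)`, and by Poisson
summation `∑_{n ∈ ℤ} φ_v(βn) = β⁻¹ ∑_{n ∈ ℤ} exp(-2π²v n²/β²)`, which is bounded uniformly in
`v ≥ 2`. The case `s > t` follows by the substitution `y ↦ x - y`.
-/

open Real Finset ProbabilityTheory
open scoped NNReal

theorem hasSum_pi_prod_of_nonneg {α : Type*} {d : ℕ} {f : Fin d → α → ℝ} {a : Fin d → ℝ}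
    (hf_nonneg : ∀ k n, 0 ≤ f k n) (hf : ∀ k, HasSum (f k) (a k)) :
    HasSum (fun y : Fin d → α => ∏ k, f k (y k)) (∏ k, a k) := by
  induction d with
  | zero => simp
  | succ d ih =>
    set g : (Fin d → α) → ℝ := fun y => ∏ k : Fin d, f k.succ (y k)
    have htail : HasSum g (∏ k : Fin d, a k.succ) :=
      ih (fun k => hf_nonneg k.succ) fun k => hf k.succ
    have hg_nonneg : 0 ≤ g := fun y => prod_nonneg fun k _ => hf_nonneg _ _
    have hsummable := (hf 0).summable.mul_of_nonneg htail.summable (hf_nonneg 0) hg_nonneg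
    rw [Fin.prod_univ_succ, ← (Fin.consEquiv fun _ => α).hasSum_iff]
    simpa [Function.comp_def, Fin.prod_univ_succ] using (hf 0).mul htail hsummable

theorem add_sq_div_add_le {s t : ℝ} (hs : 0 < s) (ht : 0 < t) (u v : ℝ) :
    (u + v) ^ 2 / (s + t) ≤ u ^ 2 / s + v ^ 2 / t := by
  rw [div_add_div _ _ hs.ne' ht.ne', div_le_div_iff₀ (by positivity) (by positivity)]
  nlinarith [sq_nonneg (u * t - v * s), mul_pos hs ht]

theorem summable_exp_neg_mul_int_sq {c : ℝ} (hc : 0 < c) :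
    Summable fun n : ℤ => exp (-c * n ^ 2) := by
  have := HurwitzKernelBounds.summable_f_int 0 0 (div_pos hc pi_pos)
  unfold HurwitzKernelBounds.f_int at this
  convert this using 2 with n
  field_simp
  simp

theorem tsum_exp_neg_mul_int_sq_le_of_le {a b : ℝ} (ha : 0 < a) (hab : a ≤ b) :
    ∑' n : ℤ, exp (-b * n ^ 2) ≤ ∑' n : ℤ, exp (-a * n ^ 2) :=
  Summable.tsum_le_tsum (fun n => exp_le_exp.2 (by nlinarith [sq_nonneg (n : ℝ)]))
    (summable_exp_neg_mul_int_sq (ha.trans_le hab)) (summable_exp_neg_mul_int_sq ha)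

theorem gaussianPDFReal_le (μ : ℝ) (v : ℝ≥0) (x : ℝ) :
    gaussianPDFReal μ v x ≤ (√(2 * π * v))⁻¹ :=
  mul_le_of_le_one_right (by positivity) <| exp_le_one_iff.2 <|
    div_nonpos_of_nonpos_of_nonneg (neg_nonpos.2 (sq_nonneg _)) (by positivity)

theorem sq_div_add_sq_div_le {s t : ℝ} (hs : 0 < s) (ht : 0 < t) (u v : ℝ) :
    ((u + v) / 2) ^ 2 / (2 * (s + t)) + u ^ 2 / (2 * (2 * s)) ≤
      u ^ 2 / (2 * s) + v ^ 2 / (2 * t) := by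
  have e1 : ((u + v) / 2) ^ 2 / (2 * (s + t)) = (u + v) ^ 2 / (s + t) / 8 := by
    field_simp; ring
  have e2 : u ^ 2 / (2 * (2 * s)) = u ^ 2 / s / 4 := by field_simp; ring
  rw [e1, e2, div_mul_eq_div_div_swap, div_mul_eq_div_div_swap]
  linarith [add_sq_div_add_le hs ht u v, div_nonneg (sq_nonneg u) hs.le,
    div_nonneg (sq_nonneg v) ht.le]

theorem gaussianPDFReal_mul_gaussianPDFReal_le {s t : ℝ≥0} (hs : 0 < s) (hst : s ≤ t)
    (u v : ℝ) :
    gaussianPDFReal 0 s u * gaussianPDFReal 0 t v ≤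
      2 * gaussianPDFReal 0 (s + t) ((u + v) / 2) * gaussianPDFReal 0 (2 * s) u := by
  replace hs : (0 : ℝ) < s := hs
  replace hst : (s : ℝ) ≤ t := hst
  have ht : (0 : ℝ) < t := hs.trans_le hst
  have hpre : (√(2 * π * s))⁻¹ * (√(2 * π * t))⁻¹ ≤
      2 * (√(2 * π * (s + t)))⁻¹ * (√(2 * π * (2 * s)))⁻¹ := by
    have key : √(2 * π * (s + t)) * √(2 * π * (2 * s)) / 2 ≤ √(2 * π * s) * √(2 * π * t) := by
      rw [← pow_le_pow_iff_left₀ (by positivity) (by positivity) two_ne_zero, div_pow, mul_pow,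
        mul_pow, sq_sqrt (by positivity), sq_sqrt (by positivity), sq_sqrt (by positivity),
        sq_sqrt (by positivity)]
      nlinarith [mul_nonneg (mul_nonneg (sq_nonneg π) hs.le) (sub_nonneg.2 hst)]
    calc (√(2 * π * s))⁻¹ * (√(2 * π * t))⁻¹ = (√(2 * π * s) * √(2 * π * t))⁻¹ :=
          (mul_inv _ _).symm
      _ ≤ (√(2 * π * (s + t)) * √(2 * π * (2 * s)) / 2)⁻¹ := inv_anti₀ (by positivity) key
      _ = 2 * (√(2 * π * (s + t)))⁻¹ * (√(2 * π * (2 * s)))⁻¹ := by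
        rw [inv_div, div_eq_mul_inv, mul_inv]; ring
  have hexp : -u ^ 2 / (2 * s) + -v ^ 2 / (2 * t) ≤
      -((u + v) / 2) ^ 2 / (2 * (s + t)) + -u ^ 2 / (2 * (2 * s)) := by
    simp only [neg_div]
    linarith [sq_div_add_sq_div_le hs ht u v]
  simp only [gaussianPDFReal, sub_zero, NNReal.coe_add, NNReal.coe_mul, NNReal.coe_ofNat]
  calc _ = (√(2 * π * s))⁻¹ * (√(2 * π * t))⁻¹ * exp (-u ^ 2 / (2 * s) + -v ^ 2 / (2 * t)) := by
        rw [exp_add]; ring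
    _ ≤ 2 * (√(2 * π * (s + t)))⁻¹ * (√(2 * π * (2 * s)))⁻¹ *
          exp (-((u + v) / 2) ^ 2 / (2 * (s + t)) + -u ^ 2 / (2 * (2 * s))) := by
        gcongr
    _ = _ := by rw [exp_add]; ring

section LatticeConv

variable {β : ℝ}

theorem summable_gaussianPDFReal_mul_int {v : ℝ≥0} (hv : 0 < v) (hβ : β ≠ 0) :
    Summable fun n : ℤ => gaussianPDFReal 0 v (β * n) := by
  have hv' : (0 : ℝ) < v := hv
  simp only [gaussianPDFReal, sub_zero]
  refine ((summable_exp_neg_mul_int_sq (c := β ^ 2 / (2 * v)) (by positivity)).mul_left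
    (√(2 * π * v))⁻¹).congr fun n => ?_
  congr 2
  ring

theorem tsum_gaussianPDFReal_mul_int {v : ℝ≥0} (hv : 0 < v) (hβ : 0 < β) :
    ∑' n : ℤ, gaussianPDFReal 0 v (β * n) =
      β⁻¹ * ∑' n : ℤ, exp (-(2 * π ^ 2 * v / β ^ 2) * n ^ 2) := by
  have hv' : (0 : ℝ) < v := hv
  set a := β ^ 2 / (2 * π * v)
  have ha : 0 < a := by positivity
  have hroot : a ^ (1 / 2 : ℝ) = β / √(2 * π * v) := by
    rw [← Real.sqrt_eq_rpow, Real.sqrt_div' _ (by positivity), Real.sqrt_sq hβ.le]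
  calc ∑' n : ℤ, gaussianPDFReal 0 v (β * n)
      = (√(2 * π * v))⁻¹ * ∑' n : ℤ, exp (-π * a * n ^ 2) := by
        simp only [gaussianPDFReal, sub_zero, ← tsum_mul_left]
        congr! 3
        simp only [a]; field_simp
    _ = (√(2 * π * v))⁻¹ * (1 / a ^ (1 / 2 : ℝ) * ∑' n : ℤ, exp (-π / a * n ^ 2)) := by
        rw [Real.tsum_exp_neg_mul_int_sq ha]
    _ = β⁻¹ * ∑' n : ℤ, exp (-(2 * π ^ 2 * v / β ^ 2) * n ^ 2) := by
        rw [hroot, ← mul_assoc]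
        congr 1
        · field_simp
        · congr! 3
          simp only [a]; field_simp

theorem summable_gaussianPDFReal_lattice_conv {s : ℝ≥0} (hs : 0 < s) (hβ : β ≠ 0)
    (t : ℝ≥0) (x : ℤ) :
    Summable fun y : ℤ => gaussianPDFReal 0 s (β * y) * gaussianPDFReal 0 t (β * (x - y)) :=
  Summable.of_nonneg_of_le
    (fun _ => mul_nonneg (gaussianPDFReal_nonneg _ _ _) (gaussianPDFReal_nonneg _ _ _))
    (fun _ => mul_le_mul_of_nonneg_left (gaussianPDFReal_le _ _ _) (gaussianPDFReal_nonneg _ _ _))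
    ((summable_gaussianPDFReal_mul_int hs hβ).mul_right _)

theorem tsum_gaussianPDFReal_lattice_conv_comm (s t : ℝ≥0) (x : ℤ) :
    ∑' y : ℤ, gaussianPDFReal 0 s (β * y) * gaussianPDFReal 0 t (β * (x - y)) =
      ∑' y : ℤ, gaussianPDFReal 0 t (β * y) * gaussianPDFReal 0 s (β * (x - y)) := by
  rw [← (Equiv.subLeft x).tsum_eq]
  congr! 2
  simp only [Equiv.subLeft_apply, Int.cast_sub, sub_sub_cancel]
  ring

theorem tsum_gaussianPDFReal_lattice_conv_le_of_le (hβ : 0 < β) {s t : ℝ≥0} (hs : 1 ≤ s)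
    (hst : s ≤ t) (x : ℤ) :
    ∑' y : ℤ, gaussianPDFReal 0 s (β * y) * gaussianPDFReal 0 t (β * (x - y)) ≤
      2 * β⁻¹ * (∑' n : ℤ, exp (-(4 * π ^ 2 / β ^ 2) * n ^ 2)) *
        gaussianPDFReal 0 (s + t) (β / 2 * x) := by
  have hs0 : 0 < s := zero_lt_one.trans_le hs
  set g := gaussianPDFReal 0 (s + t) (β / 2 * x)
  calc ∑' y : ℤ, gaussianPDFReal 0 s (β * y) * gaussianPDFReal 0 t (β * (x - y))
      ≤ ∑' y : ℤ, 2 * g * gaussianPDFReal 0 (2 * s) (β * y) := by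
        refine Summable.tsum_le_tsum (fun y => ?_)
          (summable_gaussianPDFReal_lattice_conv hs0 hβ.ne' t x)
          ((summable_gaussianPDFReal_mul_int (by positivity) hβ.ne').mul_left _)
        have h := gaussianPDFReal_mul_gaussianPDFReal_le hs0 hst (β * y) (β * (x - y))
        rwa [show (β * y + β * (x - y)) / 2 = β / 2 * x by ring] at h
    _ = 2 * g * (β⁻¹ * ∑' n : ℤ, exp (-(2 * π ^ 2 * (2 * s : ℝ≥0) / β ^ 2) * n ^ 2)) := by
        rw [tsum_mul_left, tsum_gaussianPDFReal_mul_int (by positivity) hβ]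
    _ ≤ 2 * g * (β⁻¹ * ∑' n : ℤ, exp (-(4 * π ^ 2 / β ^ 2) * n ^ 2)) := by
        have hs1 : (1 : ℝ) ≤ s := hs
        have hg : 0 ≤ g := gaussianPDFReal_nonneg _ _ _
        refine mul_le_mul_of_nonneg_left (mul_le_mul_of_nonneg_left
          (tsum_exp_neg_mul_int_sq_le_of_le (by positivity) ?_) (by positivity)) (by positivity)
        push_cast
        rw [div_le_div_iff_of_pos_right (by positivity)]
        nlinarith [sq_nonneg π]
    _ = _ := by ring

theorem exists_tsum_gaussianPDFReal_lattice_conv_le (hβ : 0 < β) :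
    ∃ C > (0 : ℝ), ∀ s t : ℝ≥0, 1 ≤ s → 1 ≤ t → ∀ x : ℤ,
      ∑' y : ℤ, gaussianPDFReal 0 s (β * y) * gaussianPDFReal 0 t (β * (x - y)) ≤
        C * gaussianPDFReal 0 (s + t) (β / 2 * x) := by
  have hθ : 0 < ∑' n : ℤ, exp (-(4 * π ^ 2 / β ^ 2) * n ^ 2) :=
    (summable_exp_neg_mul_int_sq (by positivity)).tsum_pos (fun _ => (exp_pos _).le) 0 (exp_pos _)
  refine ⟨2 * β⁻¹ * ∑' n : ℤ, exp (-(4 * π ^ 2 / β ^ 2) * n ^ 2), by positivity,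
    fun s t hs ht x => ?_⟩
  rcases le_total s t with hst | hts
  · exact tsum_gaussianPDFReal_lattice_conv_le_of_le hβ hs hst x
  · rw [tsum_gaussianPDFReal_lattice_conv_comm, add_comm s t]
    exact tsum_gaussianPDFReal_lattice_conv_le_of_le hβ ht hts x

end LatticeConv

theorem gauss_eq_prod_gaussianPDFReal (d : ℕ) (v : ℝ≥0) (u : Fin d → ℝ) :
    gauss d v u = ∏ k, gaussianPDFReal 0 v (u k) := by
  have hpre : (2 * π * v) ^ (-(d : ℝ) / 2) = (√(2 * π * v))⁻¹ ^ d := by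
    rw [sqrt_eq_rpow, ← rpow_neg (by positivity), ← rpow_natCast, ← rpow_mul (by positivity)]
    ring_nf
  simp only [gauss, gaussianPDFReal, sub_zero, prod_mul_distrib, prod_const, card_univ,
    Fintype.card_fin, ← exp_sum, neg_div, sum_div, sum_neg_distrib]
  rw [← hpre, neg_div]

theorem gauss_lattice_conv_le_general (d : ℕ) (β : ℝ) (hβ : 0 < β) :
    ∃ C > (0 : ℝ), ∀ i j : ℕ, 1 ≤ i → 1 ≤ j → ∀ x : Fin d → ℤ,
      (∑' y : Fin d → ℤ, gauss d i (β • toRealVec y) * gauss d j (β • toRealVec (x - y)))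
        ≤ C * gauss d (i + j) ((β / 2) • toRealVec x) := by
  obtain ⟨C, hC, hconv⟩ := exists_tsum_gaussianPDFReal_lattice_conv_le hβ
  refine ⟨C ^ d, by positivity, fun i j hi hj x => ?_⟩
  have hi' : (1 : ℝ≥0) ≤ i := by exact_mod_cast hi
  have hj' : (1 : ℝ≥0) ≤ j := by exact_mod_cast hj
  have hfactor := hasSum_pi_prod_of_nonneg
    (fun _ _ => mul_nonneg (gaussianPDFReal_nonneg _ _ _) (gaussianPDFReal_nonneg _ _ _))
    fun k => (summable_gaussianPDFReal_lattice_conv (zero_lt_one.trans_le hi') hβ.ne' j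
      (x k)).hasSum
  have hgauss (v : ℕ) (u : Fin d → ℝ) := gauss_eq_prod_gaussianPDFReal d v u
  have hgauss_add (u : Fin d → ℝ) := gauss_eq_prod_gaussianPDFReal d (i + j) u
  push_cast at hgauss hgauss_add
  simp only [hgauss, hgauss_add, ← prod_mul_distrib, toRealVec, Pi.smul_apply, smul_eq_mul,
    Pi.sub_apply, Int.cast_sub]
  rw [hfactor.tsum_eq]
  refine (prod_le_prod (fun _ _ => tsum_nonneg fun _ => mul_nonneg (gaussianPDFReal_nonneg _ _ _)
    (gaussianPDFReal_nonneg _ _ _)) fun k _ => hconv i j hi' hj' (x k)).trans_eq ?_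
  rw [prod_mul_distrib, prod_const, card_univ, Fintype.card_fin]

/-- Gaussian lattice convolution bound
`Σ_y φ_i(βy) φ_j(β(x−y)) ≤ C φ_{i+j}(βx/2)`. -/
theorem gauss_lattice_conv_le (d : ℕ) (hd : 1 ≤ d) (β : ℝ) (hβ : 0 < β) :
    ∃ C > (0 : ℝ), ∀ i j : ℕ, 1 ≤ i → 1 ≤ j → ∀ x : Fin d → ℤ,
      (∑' y : Fin d → ℤ, gauss d i (β • toRealVec y) * gauss d j (β • toRealVec (x - y)))
        ≤ C * gauss d (i + j) ((β / 2) • toRealVec x) :=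
  gauss_lattice_conv_le_general d β hβ
end

section
/- Let d = 2, α ∈ (0, 2), and β > 0. Then there exists a constant C = C(α, β) > 0 such that for every integer k ≥ 1 and every real t > 0: Σ_{1 ≤ n ≤ kt} (1/(n k)) Σ_{y∈Z²} ( k/(|y|² + 1) )^{α/2} exp( −β² |y|² / (2n) ) ≤ C t^{1−α/2}. -/
/-!
Write `s = α / 2` and `c = β² / (2n)`. Since `(a² + 1)(b² + 1) ≤ (a² + b² + 1)²`, the lattice sum
over `ℤ²` is at most `k ^ s` times the square of the one-dimensional sum
`∑ₘ (m² + 1) ^ (-s/2) e^{-c m²}`. Comparing the latter with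
`∫₀^∞ x ^ (-s) e^{-c x²} dx = Γ((1 - s)/2) / 2 · c ^ (-(1 - s)/2)` bounds it by a multiple of
`n ^ ((1 - s)/2)`, so the `n`-th term of the outer sum is `O(k ^ (s - 1) n ^ (-s))`, and
`∑_{n ≤ kt} n ^ (-s) ≤ (kt) ^ (1 - s) / (1 - s)`.
-/

open Real Set MeasureTheory intervalIntegral

/-- Unlike `AntitoneOn.sum_le_integral`, this allows `f` to be singular at `0`. -/
theorem sum_range_le_integral_of_antitoneOn_Ioc {f : ℝ → ℝ} {N : ℕ}
    (hf : AntitoneOn f (Ioc 0 N)) (hint : IntervalIntegrable f volume 0 N) :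
    ∑ i ∈ Finset.range N, f (i + 1 : ℕ) ≤ ∫ x in (0 : ℝ)..N, f x := by
  have hint' : ∀ k < N, IntervalIntegrable f volume k (k + 1 : ℕ) := fun k hk =>
    hint.mono_set <| by
      rw [Set.uIcc_of_le (by simp), Set.uIcc_of_le (by simp)]
      exact Icc_subset_Icc (by simp) (by exact_mod_cast hk)
  calc ∑ i ∈ Finset.range N, f (i + 1 : ℕ)
      = ∑ i ∈ Finset.range N, ∫ _ in (i : ℝ)..(i + 1 : ℕ), f (i + 1 : ℕ) := by simp
    _ ≤ ∑ i ∈ Finset.range N, ∫ x in (i : ℝ)..(i + 1 : ℕ), f x := by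
        gcongr with i hi
        refine integral_mono_on_of_le_Ioo (by simp) intervalIntegrable_const
          (hint' i (Finset.mem_range.mp hi)) fun x hx => ?_
        have hx0 : 0 < x := (Nat.cast_nonneg i).trans_lt hx.1
        have hiN : ((i + 1 : ℕ) : ℝ) ≤ N := by exact_mod_cast Finset.mem_range.mp hi
        exact hf ⟨hx0, hx.2.le.trans hiN⟩ ⟨hx0.trans hx.2, hiN⟩ hx.2.le
    _ = ∫ x in (0 : ℝ)..N, f x := by
        simpa using sum_integral_adjacent_intervals (a := fun i : ℕ => (i : ℝ)) hint'

theorem sum_Icc_rpow_neg_le {s : ℝ} (hs0 : 0 ≤ s) (hs1 : s < 1) (N : ℕ) :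
    ∑ n ∈ Finset.Icc 1 N, (n : ℝ) ^ (-s) ≤ (N : ℝ) ^ (1 - s) / (1 - s) := by
  have hanti : AntitoneOn (fun x : ℝ => x ^ (-s)) (Ioc 0 N) :=
    (antitoneOn_rpow_Ioi_of_exponent_nonpos (by linarith)).mono Ioc_subset_Ioi_self
  have hint : IntervalIntegrable (fun x : ℝ => x ^ (-s)) volume 0 N :=
    intervalIntegrable_rpow' (by linarith)
  calc ∑ n ∈ Finset.Icc 1 N, (n : ℝ) ^ (-s)
      = ∑ i ∈ Finset.range N, ((i + 1 : ℕ) : ℝ) ^ (-s) := by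
        rw [Finset.range_eq_Ico, Finset.sum_Ico_add' (fun n : ℕ => (n : ℝ) ^ (-s)) 0 N 1]
        rfl
    _ ≤ ∫ x in (0 : ℝ)..N, x ^ (-s) := sum_range_le_integral_of_antitoneOn_Ioc hanti hint
    _ = (N : ℝ) ^ (1 - s) / (1 - s) := by
        rw [integral_rpow (Or.inl (by linarith)), zero_rpow (by linarith)]
        ring_nf

theorem integral_Ioi_rpow_neg_mul_exp_neg_mul_sq {s c : ℝ} (hs : s < 1) (hc : 0 < c) :
    ∫ x in Ioi (0 : ℝ), x ^ (-s) * exp (-c * x ^ 2) =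
      Gamma ((1 - s) / 2) / 2 * c ^ (-((1 - s) / 2)) := by
  have := integral_rpow_mul_exp_neg_mul_rpow two_pos (by linarith : -1 < -s) hc
  simp only [rpow_two] at this
  rw [this, neg_add_eq_sub, neg_div]
  ring

theorem sum_range_rpow_neg_mul_exp_le {s c : ℝ} (hs0 : 0 ≤ s) (hs1 : s < 1) (hc : 0 < c)
    (N : ℕ) :
    ∑ i ∈ Finset.range N, ((i + 1 : ℕ) : ℝ) ^ (-s) * exp (-c * ((i + 1 : ℕ) : ℝ) ^ 2) ≤
      Gamma ((1 - s) / 2) / 2 * c ^ (-((1 - s) / 2)) := by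
  set f : ℝ → ℝ := fun x => x ^ (-s) * exp (-c * x ^ 2)
  have hf_int : IntegrableOn f (Ioi 0) :=
    integrableOn_rpow_mul_exp_neg_mul_sq hc (by linarith)
  have hf_nonneg : ∀ x ∈ Ioi (0 : ℝ), 0 ≤ f x := fun x hx =>
    mul_nonneg (rpow_nonneg (le_of_lt hx) _) (exp_pos _).le
  have hanti : AntitoneOn f (Ioi 0) := fun x hx y hy hxy =>
    mul_le_mul (rpow_le_rpow_of_nonpos hx hxy (by linarith))
      (exp_le_exp.mpr (by nlinarith [pow_le_pow_left₀ (le_of_lt hx) hxy 2]))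
      (exp_pos _).le (rpow_nonneg (le_of_lt hx) _)
  calc ∑ i ∈ Finset.range N, ((i + 1 : ℕ) : ℝ) ^ (-s) * exp (-c * ((i + 1 : ℕ) : ℝ) ^ 2)
      ≤ ∫ x in (0 : ℝ)..N, f x := by
        refine sum_range_le_integral_of_antitoneOn_Ioc (hanti.mono Ioc_subset_Ioi_self) ?_
        rw [intervalIntegrable_iff_integrableOn_Ioc_of_le (Nat.cast_nonneg N)]
        exact hf_int.mono_set Ioc_subset_Ioi_self
    _ ≤ ∫ x in Ioi (0 : ℝ), f x := by
        rw [integral_of_le (Nat.cast_nonneg N)]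
        exact setIntegral_mono_set hf_int ((ae_restrict_iff' measurableSet_Ioi).mpr
          (Filter.Eventually.of_forall hf_nonneg)) Ioc_subset_Ioi_self.eventuallyLE
    _ = Gamma ((1 - s) / 2) / 2 * c ^ (-((1 - s) / 2)) :=
        integral_Ioi_rpow_neg_mul_exp_neg_mul_sq hs1 hc

theorem sq_rpow_neg_half {x : ℝ} (hx : 0 ≤ x) (s : ℝ) : (x ^ 2) ^ (-(s / 2)) = x ^ (-s) := by
  rw [← rpow_natCast_mul hx]
  push_cast
  ring_nf

noncomputable def gaussWeight (s c : ℝ) (m : ℤ) : ℝ :=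
  ((m : ℝ) ^ 2 + 1) ^ (-(s / 2)) * exp (-c * (m : ℝ) ^ 2)

section gaussWeight

variable {s c : ℝ}

theorem gaussWeight_nonneg (s c : ℝ) (m : ℤ) : 0 ≤ gaussWeight s c m :=
  mul_nonneg (rpow_nonneg (by positivity) _) (exp_pos _).le

@[simp] theorem gaussWeight_zero (s c : ℝ) : gaussWeight s c 0 = 1 := by
  simp [gaussWeight]

@[simp] theorem gaussWeight_neg (s c : ℝ) (m : ℤ) :
    gaussWeight s c (-m) = gaussWeight s c m := by
  simp [gaussWeight]

theorem gaussWeight_natCast_le (hs : 0 ≤ s) {n : ℕ} (hn : n ≠ 0) :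
    gaussWeight s c n ≤ (n : ℝ) ^ (-s) * exp (-c * (n : ℝ) ^ 2) := by
  have hn' : (0 : ℝ) < n := by positivity
  unfold gaussWeight
  push_cast
  refine mul_le_mul_of_nonneg_right ?_ (exp_pos _).le
  calc ((n : ℝ) ^ 2 + 1) ^ (-(s / 2)) ≤ ((n : ℝ) ^ 2) ^ (-(s / 2)) :=
        rpow_le_rpow_of_nonpos (by positivity) (by linarith) (by linarith)
    _ = (n : ℝ) ^ (-s) := sq_rpow_neg_half hn'.le s

theorem sum_range_gaussWeight_succ_le (hs0 : 0 ≤ s) (hs1 : s < 1) (hc : 0 < c) (N : ℕ) :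
    ∑ i ∈ Finset.range N, gaussWeight s c (i + 1 : ℕ) ≤
      Gamma ((1 - s) / 2) / 2 * c ^ (-((1 - s) / 2)) :=
  (Finset.sum_le_sum fun i _ => gaussWeight_natCast_le hs0 i.succ_ne_zero).trans
    (sum_range_rpow_neg_mul_exp_le hs0 hs1 hc N)

theorem summable_gaussWeight_succ (hs0 : 0 ≤ s) (hs1 : s < 1) (hc : 0 < c) :
    Summable fun n : ℕ => gaussWeight s c (n + 1 : ℕ) :=
  summable_of_sum_range_le (fun _ => gaussWeight_nonneg _ _ _)
    (sum_range_gaussWeight_succ_le hs0 hs1 hc)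

theorem gaussWeight_neg_succ (s c : ℝ) (n : ℕ) :
    gaussWeight s c (-(n + 1)) = gaussWeight s c (n + 1 : ℕ) := by
  rw [gaussWeight_neg]; push_cast; rfl

theorem summable_gaussWeight (hs0 : 0 ≤ s) (hs1 : s < 1) (hc : 0 < c) :
    Summable (gaussWeight s c) := by
  have hsucc := summable_gaussWeight_succ hs0 hs1 hc
  refine .of_nat_of_neg_add_one ((summable_nat_add_iff 1).mp hsucc) ?_
  simpa only [gaussWeight_neg_succ] using hsucc

theorem tsum_gaussWeight_le (hs0 : 0 ≤ s) (hs1 : s < 1) (hc : 0 < c) :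
    ∑' m, gaussWeight s c m ≤ 1 + Gamma ((1 - s) / 2) * c ^ (-((1 - s) / 2)) := by
  have hsucc := summable_gaussWeight_succ hs0 hs1 hc
  have htail : ∑' n : ℕ, gaussWeight s c (n + 1 : ℕ) ≤
      Gamma ((1 - s) / 2) / 2 * c ^ (-((1 - s) / 2)) :=
    Real.tsum_le_of_sum_range_le (fun _ => gaussWeight_nonneg _ _ _)
      (sum_range_gaussWeight_succ_le hs0 hs1 hc)
  have hnat : Summable fun n : ℕ => gaussWeight s c n := (summable_nat_add_iff 1).mp hsucc
  rw [tsum_of_nat_of_neg_add_one hnat (by simpa only [gaussWeight_neg_succ] using hsucc),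
    hnat.tsum_eq_zero_add]
  simp only [gaussWeight_neg_succ, Nat.cast_zero, gaussWeight_zero]
  linarith

end gaussWeight

theorem rpow_neg_sq_add_sq_add_one_le {s : ℝ} (hs : 0 ≤ s) (a b : ℝ) :
    (a ^ 2 + b ^ 2 + 1) ^ (-s) ≤ (a ^ 2 + 1) ^ (-(s / 2)) * (b ^ 2 + 1) ^ (-(s / 2)) := by
  have hprod : (a ^ 2 + 1) * (b ^ 2 + 1) ≤ (a ^ 2 + b ^ 2 + 1) ^ 2 := by
    nlinarith [sq_nonneg (a * b), sq_nonneg a, sq_nonneg b]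
  rw [← mul_rpow (by positivity) (by positivity), ← sq_rpow_neg_half (by positivity)]
  exact rpow_le_rpow_of_nonpos (by positivity) hprod (by linarith)

theorem rpow_div_mul_exp_le_gaussWeight_mul {s c K : ℝ} (hs : 0 ≤ s) (hK : 0 ≤ K)
    (y : Fin 2 → ℤ) :
    (K / (∑ i, (y i : ℝ) ^ 2 + 1)) ^ s * exp (-c * ∑ i, (y i : ℝ) ^ 2) ≤
      K ^ s * (gaussWeight s c (y 0) * gaussWeight s c (y 1)) := by
  set a : ℝ := ((y 0 : ℤ) : ℝ)
  set b : ℝ := ((y 1 : ℤ) : ℝ)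
  rw [Fin.sum_univ_two]
  calc (K / (a ^ 2 + b ^ 2 + 1)) ^ s * exp (-c * (a ^ 2 + b ^ 2))
      = K ^ s * ((a ^ 2 + b ^ 2 + 1) ^ (-s) * (exp (-c * a ^ 2) * exp (-c * b ^ 2))) := by
        rw [div_rpow hK (by positivity), rpow_neg (by positivity), ← exp_add]
        ring_nf
    _ ≤ K ^ s * (((a ^ 2 + 1) ^ (-(s / 2)) * (b ^ 2 + 1) ^ (-(s / 2))) *
          (exp (-c * a ^ 2) * exp (-c * b ^ 2))) := by
        gcongr
        exact rpow_neg_sq_add_sq_add_one_le hs a b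
    _ = K ^ s * (gaussWeight s c (y 0) * gaussWeight s c (y 1)) := by
        unfold gaussWeight
        ring

theorem tsum_rpow_div_mul_exp_le {s c K : ℝ} (hs0 : 0 ≤ s) (hs1 : s < 1) (hc : 0 < c)
    (hK : 0 ≤ K) :
    ∑' y : Fin 2 → ℤ, (K / (∑ i, (y i : ℝ) ^ 2 + 1)) ^ s * exp (-c * ∑ i, (y i : ℝ) ^ 2) ≤
      K ^ s * (1 + Gamma ((1 - s) / 2) * c ^ (-((1 - s) / 2))) ^ 2 := by
  have hg := summable_gaussWeight hs0 hs1 hc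
  have hprod : Summable fun p : ℤ × ℤ => gaussWeight s c p.1 * gaussWeight s c p.2 :=
    hg.mul_of_nonneg hg (gaussWeight_nonneg s c) (gaussWeight_nonneg s c)
  have hpi : ∑' y : Fin 2 → ℤ, gaussWeight s c (y 0) * gaussWeight s c (y 1) =
      (∑' m, gaussWeight s c m) ^ 2 := by
    rw [sq, hg.tsum_mul_tsum hg hprod]
    exact (piFinTwoEquiv fun _ => ℤ).tsum_eq fun p => gaussWeight s c p.1 * gaussWeight s c p.2
  have hdom : Summable fun y : Fin 2 → ℤ =>
      K ^ s * (gaussWeight s c (y 0) * gaussWeight s c (y 1)) :=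
    ((piFinTwoEquiv fun _ => ℤ).summable_iff.mpr hprod).mul_left _
  calc _ ≤ ∑' y : Fin 2 → ℤ, K ^ s * (gaussWeight s c (y 0) * gaussWeight s c (y 1)) :=
        Summable.tsum_le_tsum (rpow_div_mul_exp_le_gaussWeight_mul hs0 hK)
          (hdom.of_nonneg_of_le (fun y => by positivity)
            (rpow_div_mul_exp_le_gaussWeight_mul hs0 hK)) hdom
    _ = K ^ s * (∑' m, gaussWeight s c m) ^ 2 := by rw [tsum_mul_left, hpi]
    _ ≤ K ^ s * (1 + Gamma ((1 - s) / 2) * c ^ (-((1 - s) / 2))) ^ 2 := by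
        gcongr
        · exact tsum_nonneg (gaussWeight_nonneg s c)
        · exact tsum_gaussWeight_le hs0 hs1 hc

theorem inv_mul_tsum_spike_le {s β K : ℝ} (hs0 : 0 ≤ s) (hs1 : s < 1) (hβ : β ≠ 0) (hK : 0 < K)
    {n : ℕ} (hn : n ≠ 0) :
    1 / (n * K) * ∑' y : Fin 2 → ℤ,
        (K / (∑ i, (y i : ℝ) ^ 2 + 1)) ^ s * exp (-β ^ 2 * (∑ i, (y i : ℝ) ^ 2) / (2 * n)) ≤
      (1 + Gamma ((1 - s) / 2) * (β ^ 2 / 2) ^ (-((1 - s) / 2))) ^ 2 *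
        (K ^ (s - 1) * (n : ℝ) ^ (-s)) := by
  have hn0 : (0 : ℝ) < n := by positivity
  have hn1 : (1 : ℝ) ≤ n := by exact_mod_cast Nat.one_le_iff_ne_zero.mpr hn
  have hb : (0 : ℝ) < β ^ 2 / 2 := by positivity
  set p := (1 - s) / 2
  set A := 1 + Gamma p * (β ^ 2 / 2) ^ (-p)
  have hp : 0 < p := by simp only [p]; linarith
  have hexp : ∀ S : ℝ, -β ^ 2 * S / (2 * n) = -(β ^ 2 / 2 / n) * S := fun S => by ring
  -- `1 ≤ n ^ p` absorbs the summand `1`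
  have hmain : 1 + Gamma p * (β ^ 2 / 2 / n) ^ (-p) ≤ A * (n : ℝ) ^ p := by
    rw [div_rpow hb.le hn0.le, rpow_neg hn0.le, div_inv_eq_mul]
    nlinarith [one_le_rpow hn1 hp.le, Gamma_pos_of_pos hp, rpow_pos_of_pos hb (-p)]
  have hsq : ((n : ℝ) ^ p) ^ 2 = (n : ℝ) ^ (1 - s) := by
    rw [← rpow_mul_natCast hn0.le]; simp only [p]; ring_nf
  simp only [hexp]
  calc _ ≤ 1 / (n * K) * (K ^ s * (A * (n : ℝ) ^ p) ^ 2) := by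
        gcongr
        refine (tsum_rpow_div_mul_exp_le hs0 hs1 (by positivity) hK.le).trans ?_
        gcongr
    _ = A ^ 2 * (K ^ s / K * ((n : ℝ) ^ (1 - s) / n)) := by
        rw [mul_pow, hsq]; field_simp
    _ = A ^ 2 * (K ^ (s - 1) * (n : ℝ) ^ (-s)) := by
        rw [← rpow_sub_one hK.ne', ← rpow_sub_one hn0.ne']
        ring_nf

theorem rpow_sub_one_mul_sum_Icc_floor_le {s K t : ℝ} (hs0 : 0 ≤ s) (hs1 : s < 1) (hK : 0 < K)
    (ht : 0 < t) :
    K ^ (s - 1) * ∑ n ∈ Finset.Icc 1 ⌊K * t⌋₊, (n : ℝ) ^ (-s) ≤ t ^ (1 - s) / (1 - s) := by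
  have hfloor : (⌊K * t⌋₊ : ℝ) ≤ K * t := Nat.floor_le (by positivity)
  calc _ ≤ K ^ (s - 1) * ((⌊K * t⌋₊ : ℝ) ^ (1 - s) / (1 - s)) := by
        gcongr
        exact sum_Icc_rpow_neg_le hs0 hs1 _
    _ ≤ K ^ (s - 1) * ((K * t) ^ (1 - s) / (1 - s)) := by
        gcongr
    _ = t ^ (1 - s) / (1 - s) := by
        rw [mul_rpow hK.le ht.le, ← mul_div_assoc, ← mul_assoc, ← rpow_add hK]
        norm_num

/-- two-dimensional Gaussian-sum estimate:
`Σ_{1≤n≤kt} (1/(nk)) Σ_{y∈ℤ²} (k/(|y|²+1))^{α/2} exp(−β²|y|²/(2n)) ≤ C t^{1−α/2}`. -/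
theorem gauss_spike_sum_le (α β : ℝ) (hα0 : 0 < α) (hα : α < 2) (hβ : 0 < β) :
    ∃ C > (0 : ℝ), ∀ k : ℕ, 1 ≤ k → ∀ t : ℝ, 0 < t →
      (∑ n ∈ Finset.Icc 1 ⌊(k : ℝ) * t⌋₊, (1 / ((n : ℝ) * k)) *
        ∑' y : Fin 2 → ℤ,
          ((k : ℝ) / ((∑ i, ((y i : ℝ)) ^ 2) + 1)) ^ (α / 2) *
            Real.exp (-β ^ 2 * (∑ i, ((y i : ℝ)) ^ 2) / (2 * n)))
        ≤ C * t ^ (1 - α / 2) := by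
  set s := α / 2
  have hs0 : 0 ≤ s := by positivity
  have hs1 : s < 1 := by simp only [s]; linarith
  set A := 1 + Gamma ((1 - s) / 2) * (β ^ 2 / 2) ^ (-((1 - s) / 2))
  have hA : 0 < A := by
    have : 0 < (1 - s) / 2 := by linarith
    positivity
  refine ⟨A ^ 2 / (1 - s), div_pos (by positivity) (by linarith), fun k hk t ht => ?_⟩
  have hk0 : (0 : ℝ) < k := by exact_mod_cast hk
  calc _ ≤ ∑ n ∈ Finset.Icc 1 ⌊(k : ℝ) * t⌋₊, A ^ 2 * ((k : ℝ) ^ (s - 1) * (n : ℝ) ^ (-s)) :=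
        Finset.sum_le_sum fun n hn => inv_mul_tsum_spike_le hs0 hs1 hβ.ne' hk0
          (Nat.one_le_iff_ne_zero.mp (Finset.mem_Icc.mp hn).1)
    _ = A ^ 2 * ((k : ℝ) ^ (s - 1) * ∑ n ∈ Finset.Icc 1 ⌊(k : ℝ) * t⌋₊, (n : ℝ) ^ (-s)) := by
        rw [Finset.mul_sum, Finset.mul_sum]
    _ ≤ A ^ 2 * (t ^ (1 - s) / (1 - s)) := by
        gcongr
        exact rpow_sub_one_mul_sum_Icc_floor_le hs0 hs1 hk0 ht
    _ = A ^ 2 / (1 - s) * t ^ (1 - s) := by ring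
end
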